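/- arXiv:2204.13019 — 7 statements merged into one kernel-verified Lean document; each statement's English description precedes it below -/
import Mathlib

section
/- Let δ be a valid perturbation profile and let x* be a feasible allocation that maximizes the perturbed objective V_δ over all feasible allocations. Then x* is a valid allocation, i.e., x* satisfies the priority requirement (PR) and is Pareto efficient (PE). -/
/-!
Both properties follow by exhibiting a direction `g` such that `x + ε • g` stays feasible for
small `ε > 0` while `V_δ g > 0`. If PR fails, `g` moves mass in a category `c` from an agent `a`
to a higher-priority agent `a'` with spare capacity, gaining `δ a c - δ a' c > 0` by consistency
of `δ`.
If `y` Pareto-dominates `x`, improving `a₀` strictly, consider the agents reachable from `a₀` by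
exchanges `b → b'` (`b` is eligible for `c` and `b'` holds some of `c`). Were every category
usable by them full, it would be held by reachable agents only, and counting over this cut shows
that `y` cannot give them more than `x` does. So some shortest exchange path from `a₀` ends at
an agent eligible for a category with spare capacity; along it `g` has entries `≤ 1` and total
mass `1`, whence `V_δ g ≥ 1 - ∑ δ ≥ 1/2`.
-/

open Finset

/-- An allocation instance: quotas, eligibility sets, and priority relations. -/
structure AllocInstance (A C : Type*) where
  quota : C → ℕ
  elig : C → Set A
  prio : C → A → A → Prop

namespace AllocInstance

variable {A C : Type*} [Fintype A] [Fintype C]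

/-- Strict priority: `a ≻_c a'`. -/
def Strict (I : AllocInstance A C) (c : C) (a a' : A) : Prop :=
  I.prio c a a' ∧ ¬ I.prio c a' a

/-- The priority relation of each category is a total preorder on its eligible set. -/
def TotalPreorder (I : AllocInstance A C) : Prop :=
  (∀ c, ∀ a ∈ I.elig c, I.prio c a a) ∧
  (∀ c, ∀ a ∈ I.elig c, ∀ a' ∈ I.elig c, ∀ a'' ∈ I.elig c,
      I.prio c a a' → I.prio c a' a'' → I.prio c a a'') ∧
  (∀ c, ∀ a ∈ I.elig c, ∀ a' ∈ I.elig c, I.prio c a a' ∨ I.prio c a' a)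

/-- The priority relation of each category is a (strict) total order on its eligible
set, i.e. an antisymmetric total preorder. -/
def StrictTotalPrio (I : AllocInstance A C) : Prop :=
  I.TotalPreorder ∧
  (∀ c, ∀ a ∈ I.elig c, ∀ a' ∈ I.elig c, I.prio c a a' → I.prio c a' a → a = a')

/-- A feasible allocation: nonnegative, eligibility (ER), quotas (QR), unit demand. -/
def Feasible (I : AllocInstance A C) (x : A → C → ℝ) : Prop :=
  (∀ a c, 0 ≤ x a c) ∧
  (∀ a c, a ∉ I.elig c → x a c = 0) ∧
  (∀ c, ∑ a, x a c ≤ (I.quota c : ℝ)) ∧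
  (∀ a, ∑ c, x a c ≤ 1)

/-- The size of an allocation. -/
def V (_I : AllocInstance A C) (x : A → C → ℝ) : ℝ := ∑ a, ∑ c, x a c

/-- Respect for priorities (PR). -/
def PR (I : AllocInstance A C) (x : A → C → ℝ) : Prop :=
  ∀ c, ∀ a ∈ I.elig c, ∀ a' ∈ I.elig c,
    I.Strict c a' a → 0 < x a c → ∑ c', x a' c' = 1

/-- Pareto efficiency (PE). -/
def PE (I : AllocInstance A C) (x : A → C → ℝ) : Prop :=
  ¬ ∃ y, I.Feasible y ∧ I.PR y ∧
    (∀ a, ∑ c, x a c ≤ ∑ c, y a c) ∧ (∃ a, ∑ c, x a c < ∑ c, y a c)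

/-- A valid allocation: feasible, respecting priorities, and Pareto efficient. -/
def Valid (I : AllocInstance A C) (x : A → C → ℝ) : Prop :=
  I.Feasible x ∧ I.PR x ∧ I.PE x

/-- An integral allocation. -/
def Integral (_I : AllocInstance A C) (x : A → C → ℝ) : Prop :=
  ∀ a c, x a c = 0 ∨ x a c = 1

/-- A valid perturbation profile: positivity, small effect, consistency. -/
def ValidPerturbation (I : AllocInstance A C) (δ : A → C → ℝ) : Prop :=
  (∀ a c, 0 < δ a c) ∧
  (∑ a, ∑ c, δ a c ≤ 1 / 2) ∧
  (∀ c, ∀ a ∈ I.elig c, ∀ a' ∈ I.elig c, (I.prio c a a' ↔ δ a' c ≥ δ a c))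

/-- The perturbed objective `V_δ`. -/
def Vd (_I : AllocInstance A C) (δ x : A → C → ℝ) : ℝ :=
  ∑ a, ∑ c, x a c * (1 - δ a c)

/-- Category stability (CS): no cyclic trade among categories in which some category
passes its allocation to a strictly higher-priority agent. -/
def CS (I : AllocInstance A C) (x : A → C → ℝ) : Prop :=
  ¬ ∃ (j : ℕ) (c : ℕ → C) (a : ℕ → A),
      2 ≤ j ∧ c j = c 0 ∧ a j = a 0 ∧
      (∀ i < j, 0 < x (a i) (c i) ∧ I.prio (c i) (a (i + 1)) (a i)) ∧
      (∃ i < j, I.Strict (c i) (a (i + 1)) (a i))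

end AllocInstance

open Filter Topology

lemma eventually_add_mul_le {u v b : ℝ} (h : (v ≤ 0 ∧ u ≤ b) ∨ u < b) :
    ∀ᶠ ε in 𝓝[>] (0 : ℝ), u + ε * v ≤ b := by
  rcases h with ⟨hv, hu⟩ | hu
  · filter_upwards [self_mem_nhdsWithin] with ε (hε : 0 < ε)
    nlinarith
  · have hcont : Continuous fun ε : ℝ => u + ε * v := by fun_prop
    have : Tendsto (fun ε : ℝ => u + ε * v) (𝓝[>] 0) (𝓝 u) :=
      tendsto_nhdsWithin_of_tendsto_nhds (by simpa using hcont.tendsto 0)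
    exact (this.eventually_lt_const hu).mono fun _ => le_of_lt

namespace AllocInstance

variable {A C : Type*} [Fintype A] [Fintype C] (I : AllocInstance A C)

lemma Vd_add_smul (δ x g : A → C → ℝ) (ε : ℝ) :
    I.Vd δ (x + ε • g) = I.Vd δ x + ε * I.Vd δ g := by
  simp only [Vd, Pi.add_apply, Pi.smul_apply, smul_eq_mul, add_mul, mul_assoc,
    Finset.sum_add_distrib, Finset.mul_sum]

lemma Vd_sub (δ f h : A → C → ℝ) : I.Vd δ (f - h) = I.Vd δ f - I.Vd δ h := by
  simp only [Vd, Pi.sub_apply, sub_mul, Finset.sum_sub_distrib]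

variable {I} in
lemma Feasible.eventually_add_smul {x g : A → C → ℝ} (hx : I.Feasible x)
    (hneg : ∀ a c, g a c < 0 → 0 < x a c) (helig : ∀ a c, a ∉ I.elig c → g a c = 0)
    (hcol : ∀ c, ∑ a, g a c ≤ 0 ∨ ∑ a, x a c < I.quota c)
    (hrow : ∀ a, ∑ c, g a c ≤ 0 ∨ ∑ c, x a c < 1) :
    ∀ᶠ ε in 𝓝[>] (0 : ℝ), I.Feasible (x + ε • g) := by
  obtain ⟨hnn, hER, hQR, hdem⟩ := hx
  have hnn' : ∀ a c, ∀ᶠ ε in 𝓝[>] (0 : ℝ), -x a c + ε * -g a c ≤ 0 := fun a c =>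
    eventually_add_mul_le <| by
      rcases le_or_gt 0 (g a c) with h | h
      · exact .inl ⟨by linarith, by linarith [hnn a c]⟩
      · exact .inr (by linarith [hneg a c h])
  have hQR' : ∀ c, ∀ᶠ ε in 𝓝[>] (0 : ℝ), ∑ a, x a c + ε * ∑ a, g a c ≤ I.quota c :=
    fun c => eventually_add_mul_le <| (hcol c).imp_left fun h => ⟨h, hQR c⟩
  have hdem' : ∀ a, ∀ᶠ ε in 𝓝[>] (0 : ℝ), ∑ c, x a c + ε * ∑ c, g a c ≤ 1 :=
    fun a => eventually_add_mul_le <| (hrow a).imp_left fun h => ⟨h, hdem a⟩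
  filter_upwards [eventually_all.2 fun a => eventually_all.2 (hnn' a),
    eventually_all.2 hQR', eventually_all.2 hdem'] with ε hnnε hQRε hdemε
  refine ⟨fun a c => ?_, fun a c ha => ?_, fun c => ?_, fun a => ?_⟩
  · simp only [Pi.add_apply, Pi.smul_apply, smul_eq_mul]
    linarith [hnnε a c]
  · simp [hER a c ha, helig a c ha]
  · simpa [Finset.sum_add_distrib, Finset.mul_sum] using hQRε c
  · simpa [Finset.sum_add_distrib, Finset.mul_sum] using hdemε a

lemma Vd_nonpos_of_isMax {δ x g : A → C → ℝ}
    (hmax : ∀ y, I.Feasible y → I.Vd δ y ≤ I.Vd δ x)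
    (hg : ∀ᶠ ε in 𝓝[>] (0 : ℝ), I.Feasible (x + ε • g)) : I.Vd δ g ≤ 0 := by
  obtain ⟨ε, hε, hεpos⟩ := (hg.and self_mem_nhdsWithin).exists
  have := hmax _ hε
  rw [Vd_add_smul] at this
  exact nonpos_of_mul_nonpos_right (by linarith) (hεpos : (0:ℝ) < ε)

lemma Vd_pos_of_le_one {δ h : A → C → ℝ} (hδ : I.ValidPerturbation δ)
    (hle : ∀ a c, h a c ≤ 1) (hsum : ∑ a, ∑ c, h a c = 1) : 0 < I.Vd δ h := by
  have hδh : ∑ a, ∑ c, h a c * δ a c ≤ ∑ a, ∑ c, δ a c :=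
    Finset.sum_le_sum fun a _ => Finset.sum_le_sum fun c _ =>
      mul_le_of_le_one_left (hδ.1 a c).le (hle a c)
  have : I.Vd δ h = ∑ a, ∑ c, h a c - ∑ a, ∑ c, h a c * δ a c := by
    simp only [Vd, mul_sub, mul_one, Finset.sum_sub_distrib]
  linarith [hδ.2.1]

section Single

variable [DecidableEq A] [DecidableEq C]

def single (b : A) (c : C) : A → C → ℝ := fun a c' => if a = b ∧ c' = c then 1 else 0

omit [Fintype A] in
@[simp] lemma sum_single_row (b : A) (c : C) (a : A) :
    ∑ c', single b c a c' = if a = b then 1 else 0 := by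
  by_cases h : a = b <;> simp [single, h]

omit [Fintype C] in
@[simp] lemma sum_single_col (b : A) (c c' : C) :
    ∑ a, single b c a c' = if c' = c then 1 else 0 := by
  by_cases h : c' = c <;> simp [single, h]

lemma Vd_single (δ : A → C → ℝ) (b : A) (c : C) : I.Vd δ (single b c) = 1 - δ b c := by
  simp [Vd, single, ite_and]

end Single

lemma pr_of_isMax {δ x : A → C → ℝ} (hδ : I.ValidPerturbation δ) (hx : I.Feasible x)
    (hmax : ∀ y, I.Feasible y → I.Vd δ y ≤ I.Vd δ x) : I.PR x := by
  classical
  intro c a ha a' ha' hstrict hpos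
  have hδlt : δ a' c < δ a c :=
    lt_of_not_ge fun h => hstrict.2 ((hδ.2.2 c a ha a' ha').2 h)
  have hne : a' ≠ a := by rintro rfl; exact lt_irrefl _ hδlt
  by_contra hfull
  have hslack : ∑ c', x a' c' < 1 := lt_of_le_of_ne (hx.2.2.2 a') hfull
  have hfeas : ∀ᶠ ε in 𝓝[>] (0 : ℝ), I.Feasible (x + ε • (single a' c - single a c)) := by
    refine hx.eventually_add_smul (fun b d h => ?_) (fun b d h => ?_) (fun d => ?_) (fun b => ?_)
    · by_cases hbd : b = a ∧ d = c
      · obtain ⟨rfl, rfl⟩ := hbd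
        exact hpos
      · simp only [Pi.sub_apply, single, if_neg hbd, sub_zero] at h
        split_ifs at h <;> norm_num at h
    · by_cases hd : d = c
      · subst hd
        have : b ≠ a := by rintro rfl; exact h ha
        have : b ≠ a' := by rintro rfl; exact h ha'
        simp [single, *]
      · simp [single, hd]
    · simp
    · by_cases hb : b = a'
      · subst hb; simp [hne, hslack]
      · by_cases hb' : b = a <;> simp [hb, hb', hne.symm]
  have := I.Vd_nonpos_of_isMax hmax hfeas
  rw [Vd_sub, Vd_single, Vd_single] at this
  linarith

/-- The net change of an exchange path from `a₀` to `b`: every agent on the path gains one unit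
of a category it is eligible for, taken from the next agent, who holds some of it in `x`. -/
structure IsExchangeChain [DecidableEq A] (x g : A → C → ℝ) (a₀ b : A) : Prop where
  le_one : ∀ a c, g a c ≤ 1
  pos_of_neg : ∀ a c, g a c < 0 → 0 < x a c
  eq_zero_of_not_mem : ∀ a c, a ∉ I.elig c → g a c = 0
  sum_col : ∀ c, ∑ a, g a c = 0
  sum_row : ∀ a, ∑ c, g a c = (if a = a₀ then 1 else 0) - (if a = b then 1 else 0)
  nonpos_end : ∀ c, g b c ≤ 0

def exchangeReach (x : A → C → ℝ) (a₀ : A) : ℕ → Set A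
  | 0 => {a₀}
  | n + 1 => exchangeReach x a₀ n ∪
      {b' | ∃ b ∈ exchangeReach x a₀ n, ∃ c, b ∈ I.elig c ∧ 0 < x b' c}

lemma exists_exchangeReach_slack {x y : A → C → ℝ} {a₀ : A} (hx : I.Feasible x)
    (hy : I.Feasible y) (hdom : ∀ a, ∑ c, x a c ≤ ∑ c, y a c)
    (hlt : ∑ c, x a₀ c < ∑ c, y a₀ c) :
    ∃ n, ∃ b ∈ I.exchangeReach x a₀ n, ∃ c, b ∈ I.elig c ∧ ∑ a, x a c < I.quota c := by
  classical
  by_contra! hfull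
  set S : Finset A := univ.filter fun b => ∃ n, b ∈ I.exchangeReach x a₀ n
  set T : Finset C := univ.filter fun c => ∃ b ∈ S, b ∈ I.elig c
  have hS : ∀ {b}, b ∈ S ↔ ∃ n, b ∈ I.exchangeReach x a₀ n := by simp [S]
  have hT : ∀ {c}, c ∈ T ↔ ∃ b ∈ S, b ∈ I.elig c := by simp [T]
  have hT_full : ∀ c ∈ T, ∑ a, x a c = I.quota c := by
    intro c hc
    obtain ⟨b, hb, hbc⟩ := hT.1 hc
    obtain ⟨n, hbn⟩ := hS.1 hb
    exact le_antisymm (hx.2.2.1 c) (hfull n b hbn c hbc)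
  have hT_held : ∀ c ∈ T, ∀ a ∉ S, x a c = 0 := by
    intro c hc a ha
    obtain ⟨b, hb, hbc⟩ := hT.1 hc
    obtain ⟨n, hbn⟩ := hS.1 hb
    refine (hx.1 a c).antisymm' (not_lt.1 fun hpos => ha (hS.2 ⟨n + 1, ?_⟩))
    exact Or.inr ⟨b, hbn, c, hbc, hpos⟩
  have hS_T : ∀ z, I.Feasible z → ∀ a ∈ S, ∑ c, z a c = ∑ c ∈ T, z a c := by
    intro z hz a ha
    refine (Finset.sum_subset (Finset.subset_univ T) fun c _ hc => hz.2.1 a c ?_).symm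
    exact fun hac => hc (hT.2 ⟨a, ha, hac⟩)
  have hle : ∑ a ∈ S, ∑ c, y a c ≤ ∑ a ∈ S, ∑ c, x a c := calc
    _ = ∑ c ∈ T, ∑ a ∈ S, y a c := by
      rw [Finset.sum_congr rfl (hS_T y hy), Finset.sum_comm]
    _ ≤ ∑ c ∈ T, ∑ a, y a c := Finset.sum_le_sum fun c _ =>
      Finset.sum_le_sum_of_subset_of_nonneg (Finset.subset_univ S) fun a _ _ => hy.1 a c
    _ ≤ ∑ c ∈ T, (I.quota c : ℝ) := Finset.sum_le_sum fun c _ => hy.2.2.1 c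
    _ = ∑ c ∈ T, ∑ a ∈ S, x a c := Finset.sum_congr rfl fun c hc =>
      (hT_full c hc).symm.trans
        (Finset.sum_subset (Finset.subset_univ S) fun a _ ha => hT_held c hc a ha).symm
    _ = ∑ a ∈ S, ∑ c, x a c := by
      rw [Finset.sum_congr rfl (hS_T x hx), Finset.sum_comm]
  have hlt' : ∑ a ∈ S, ∑ c, x a c < ∑ a ∈ S, ∑ c, y a c :=
    Finset.sum_lt_sum (fun a _ => hdom a) ⟨a₀, hS.2 ⟨0, rfl⟩, hlt⟩
  exact hle.not_gt hlt'

section Chain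

variable {I} [DecidableEq A] [DecidableEq C] {x g : A → C → ℝ} {a₀ b : A}

lemma IsExchangeChain.extend (hx : I.Feasible x) (hg : I.IsExchangeChain x g a₀ b)
    {b' : A} {c : C} (hbc : b ∈ I.elig c) (hpos : 0 < x b' c) (hfresh : ∀ c', g b' c' = 0) :
    I.IsExchangeChain x (g + single b c - single b' c) a₀ b' where
  le_one a c' := by
    have := hg.le_one a c'
    have := hg.nonpos_end c
    simp only [Pi.add_apply, Pi.sub_apply, single]
    split_ifs with h₁ h₂ <;> first | linarith | (obtain ⟨rfl, rfl⟩ := h₁; linarith)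
  pos_of_neg a c' h := by
    by_cases h' : a = b' ∧ c' = c
    · obtain ⟨rfl, rfl⟩ := h'
      exact hpos
    · simp only [Pi.add_apply, Pi.sub_apply, single, if_neg h', sub_zero] at h
      exact hg.pos_of_neg a c' (by split_ifs at h <;> linarith)
  eq_zero_of_not_mem a c' h := by
    have hb'c : b' ∈ I.elig c := by_contra fun h' => hpos.ne' (hx.2.1 b' c h')
    have h₁ : ¬ (a = b ∧ c' = c) := by rintro ⟨rfl, rfl⟩; exact h hbc
    have h₂ : ¬ (a = b' ∧ c' = c) := by rintro ⟨rfl, rfl⟩; exact h hb'c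
    simp [single, h₁, h₂, hg.eq_zero_of_not_mem a c' h]
  sum_col c' := by
    simp [Finset.sum_add_distrib, Finset.sum_sub_distrib, hg.sum_col]
  sum_row a := by
    simp only [Pi.add_apply, Pi.sub_apply, Finset.sum_add_distrib, Finset.sum_sub_distrib,
      hg.sum_row, sum_single_row]
    ring
  nonpos_end c' := by
    simp only [Pi.add_apply, Pi.sub_apply, single, hfresh]
    split_ifs <;> simp_all

/-- The support condition keeps the path a shortest one, so that the agent it is extended to
still has an empty row. -/
lemma exists_isExchangeChain (hx : I.Feasible x) (n : ℕ) :
    ∀ b ∈ I.exchangeReach x a₀ n, ∃ g, I.IsExchangeChain x g a₀ b ∧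
      ∀ a ∉ I.exchangeReach x a₀ n, ∀ c, g a c = 0 := by
  induction n with
  | zero =>
    rintro b rfl
    refine ⟨0, ⟨?_, ?_, ?_, ?_, ?_, ?_⟩, fun _ _ _ => rfl⟩ <;> simp
  | succ n ih =>
    have hmono : I.exchangeReach x a₀ n ⊆ I.exchangeReach x a₀ (n + 1) :=
      Set.subset_union_left
    intro b' hb'
    by_cases hb'n : b' ∈ I.exchangeReach x a₀ n
    · obtain ⟨g, hg, hsupp⟩ := ih b' hb'n
      exact ⟨g, hg, fun a ha => hsupp a fun h => ha (hmono h)⟩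
    obtain ⟨b, hb, c, hbc, hpos⟩ := hb'.resolve_left hb'n
    obtain ⟨g, hg, hsupp⟩ := ih b hb
    refine ⟨_, hg.extend hx hbc hpos (hsupp b' hb'n), fun a ha c' => ?_⟩
    have hab : a ≠ b := by rintro rfl; exact ha (hmono hb)
    have hab' : a ≠ b' := by rintro rfl; exact ha (Or.inr ⟨b, hb, c, hbc, hpos⟩)
    simp [single, hab, hab', hsupp a fun h => ha (hmono h)]

lemma IsExchangeChain.eventually_feasible_augment (hx : I.Feasible x)
    (hg : I.IsExchangeChain x g a₀ b) {c : C} (hbc : b ∈ I.elig c)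
    (hc : ∑ a, x a c < I.quota c) (ha₀ : ∑ c, x a₀ c < 1) :
    ∀ᶠ ε in 𝓝[>] (0 : ℝ), I.Feasible (x + ε • (g + single b c)) := by
  refine hx.eventually_add_smul (fun a c' h => ?_) (fun a c' h => ?_) (fun c' => ?_)
    (fun a => ?_)
  · refine hg.pos_of_neg a c' ?_
    have : 0 ≤ single b c a c' := by unfold single; split_ifs <;> norm_num
    simp only [Pi.add_apply] at h
    linarith
  · have h₁ : ¬ (a = b ∧ c' = c) := by rintro ⟨rfl, rfl⟩; exact h hbc
    simp [single, h₁, hg.eq_zero_of_not_mem a c' h]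
  · by_cases hc' : c' = c
    · subst hc'
      exact .inr hc
    · simp [Finset.sum_add_distrib, hg.sum_col, hc']
  · by_cases ha : a = a₀
    · subst ha
      exact .inr ha₀
    · simp [Finset.sum_add_distrib, hg.sum_row, ha]

lemma IsExchangeChain.Vd_augment_pos {δ : A → C → ℝ} (hδ : I.ValidPerturbation δ)
    (hg : I.IsExchangeChain x g a₀ b) (c : C) : 0 < I.Vd δ (g + single b c) := by
  refine I.Vd_pos_of_le_one hδ (fun a c' => ?_) ?_
  · have := hg.le_one a c'
    have := hg.nonpos_end c
    simp only [Pi.add_apply, single]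
    split_ifs with h
    · obtain ⟨rfl, rfl⟩ := h
      linarith
    · linarith
  · simp [Finset.sum_add_distrib, hg.sum_row]

end Chain

lemma pe_of_isMax {δ x : A → C → ℝ} (hδ : I.ValidPerturbation δ) (hx : I.Feasible x)
    (hmax : ∀ y, I.Feasible y → I.Vd δ y ≤ I.Vd δ x) : I.PE x := by
  classical
  rintro ⟨y, hy, -, hdom, a₀, hlt⟩
  obtain ⟨n, b, hb, c, hbc, hc⟩ := I.exists_exchangeReach_slack hx hy hdom hlt
  obtain ⟨g, hg, -⟩ := exists_isExchangeChain hx n b hb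
  have ha₀ : ∑ c, x a₀ c < 1 := hlt.trans_le (hy.2.2.2 a₀)
  exact (I.Vd_nonpos_of_isMax hmax (hg.eventually_feasible_augment hx hbc hc ha₀)).not_gt
    (hg.Vd_augment_pos hδ c)

end AllocInstance

theorem stmt0_general {A C : Type*} [Fintype A] [Fintype C] (I : AllocInstance A C)
    (δ : A → C → ℝ) (hδ : I.ValidPerturbation δ)
    (xstar : A → C → ℝ) (hfeas : I.Feasible xstar)
    (hmax : ∀ y, I.Feasible y → I.Vd δ y ≤ I.Vd δ xstar) :
    I.Valid xstar :=
  ⟨hfeas, I.pr_of_isMax hδ hfeas hmax, I.pe_of_isMax hδ hfeas hmax⟩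

/-- any maximizer of the perturbed objective `V_δ` over feasible
allocations, for a valid perturbation `δ`, is a valid allocation (PR and PE). -/
theorem stmt0 {A C : Type*} [Fintype A] [Fintype C] (I : AllocInstance A C)
    (hpre : I.TotalPreorder) (δ : A → C → ℝ) (hδ : I.ValidPerturbation δ)
    (xstar : A → C → ℝ) (hfeas : I.Feasible xstar)
    (hmax : ∀ y, I.Feasible y → I.Vd δ y ≤ I.Vd δ xstar) :
    I.Valid xstar :=
  stmt0_general I δ hδ xstar hfeas hmax
end

section
/- Let δ be a valid perturbation profile and let x be a feasible allocation. If there exist a category c and agents a, a' ∈ E_c with a' ≻_c a, x_{a,c} > 0, and ∑_{c'} x_{a',c'} < 1, then x does not maximize the perturbed objective V_δ over all feasible allocations. -/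
open Finset

/-- a feasible allocation with a priority violation does not maximize
the perturbed objective `V_δ` for any valid perturbation `δ`. -/
theorem stmt1 {A C : Type*} [Fintype A] [Fintype C] (I : AllocInstance A C)
    (hpre : I.TotalPreorder) (δ : A → C → ℝ) (hδ : I.ValidPerturbation δ)
    (x : A → C → ℝ) (hfeas : I.Feasible x)
    (c : C) (a a' : A) (ha : a ∈ I.elig c) (ha' : a' ∈ I.elig c)
    (hstrict : I.Strict c a' a) (hpos : 0 < x a c) (hlt : ∑ c', x a' c' < 1) :
    ¬ ∀ y, I.Feasible y → I.Vd δ y ≤ I.Vd δ x := by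
  classical
  intro hmax
  obtain ⟨hδpos, _, hcons⟩ := hδ
  have hne : a ≠ a' := by
    rintro rfl
    exact hstrict.2 hstrict.1
  have hδlt : δ a' c < δ a c := by
    have h2 : ¬ δ a' c ≥ δ a c := fun h => hstrict.2 ((hcons c a ha a' ha').mpr h)
    linarith [not_le.mp h2]
  set ε : ℝ := min (x a c) (1 - ∑ c', x a' c') with hε
  have hεpos : 0 < ε := lt_min hpos (by linarith)
  have hεle1 : ε ≤ x a c := min_le_left _ _
  have hεle2 : ε ≤ 1 - ∑ c', x a' c' := min_le_right _ _
  obtain ⟨hnn, her, hqr, hud⟩ := hfeas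
  set y : A → C → ℝ := fun b d =>
    x b d + (if b = a' ∧ d = c then ε else 0) - (if b = a ∧ d = c then ε else 0) with hy
  have hsum1 : ∀ d, (∑ b, (if b = a' ∧ d = c then ε else 0)) = if d = c then ε else 0 := by
    intro d
    simp [ite_and, Finset.sum_ite_eq']
  have hsum2 : ∀ d, (∑ b, (if b = a ∧ d = c then ε else 0)) = if d = c then ε else 0 := by
    intro d
    simp [ite_and, Finset.sum_ite_eq']
  have hrow1 : ∀ b, (∑ d, (if b = a' ∧ d = c then ε else 0)) = if b = a' then ε else 0 := by
    intro b
    by_cases h : b = a' <;> simp [h]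
  have hrow2 : ∀ b, (∑ d, (if b = a ∧ d = c then ε else 0)) = if b = a then ε else 0 := by
    intro b
    by_cases h : b = a <;> simp [h]
  have hyfeas : I.Feasible y := by
    refine ⟨?_, ?_, ?_, ?_⟩
    · intro b d
      simp only [hy]
      by_cases h1 : b = a ∧ d = c
      · have h2 : ¬ (b = a' ∧ d = c) := fun h => hne (h1.1.symm.trans h.1)
        rw [if_pos h1, if_neg h2, h1.1, h1.2]
        linarith
      · rw [if_neg h1]
        by_cases h2 : b = a' ∧ d = c
        · rw [if_pos h2]
          linarith [hnn b d]
        · rw [if_neg h2]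
          simpa using hnn b d
    · intro b d hbd
      have h1 : ¬ (b = a' ∧ d = c) := fun h => hbd (by rw [h.1, h.2]; exact ha')
      have h2 : ¬ (b = a ∧ d = c) := fun h => hbd (by rw [h.1, h.2]; exact ha)
      simp only [hy]
      rw [if_neg h1, if_neg h2, her b d hbd]
      ring
    · intro d
      simp only [hy]
      rw [Finset.sum_sub_distrib, Finset.sum_add_distrib, hsum1 d, hsum2 d]
      linarith [hqr d]
    · intro b
      simp only [hy]
      rw [Finset.sum_sub_distrib, Finset.sum_add_distrib, hrow1 b, hrow2 b]
      by_cases h1 : b = a'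
      · have h2 : ¬ b = a := fun h => hne (h.symm.trans h1)
        rw [if_pos h1, if_neg h2, h1]
        linarith
      · rw [if_neg h1]
        by_cases h2 : b = a
        · rw [if_pos h2, h2]
          linarith [hud a]
        · rw [if_neg h2]
          simpa using hud b
  have hV : I.Vd δ y = I.Vd δ x + ε * (δ a c - δ a' c) := by
    simp only [AllocInstance.Vd, hy]
    have : ∀ b d, (x b d + (if b = a' ∧ d = c then ε else 0) -
        (if b = a ∧ d = c then ε else 0)) * (1 - δ b d)
        = x b d * (1 - δ b d) + (if b = a' ∧ d = c then ε * (1 - δ b d) else 0)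
          - (if b = a ∧ d = c then ε * (1 - δ b d) else 0) := by
      intro b d
      by_cases h1 : b = a' ∧ d = c
      · have h2 : ¬ (b = a ∧ d = c) := fun h => hne (h.1.symm.trans h1.1)
        rw [if_pos h1, if_pos h1, if_neg h2, if_neg h2]
        ring
      · rw [if_neg h1, if_neg h1]
        by_cases h2 : b = a ∧ d = c
        · rw [if_pos h2, if_pos h2]
          ring
        · rw [if_neg h2, if_neg h2]
          ring
    simp only [this]
    simp only [Finset.sum_sub_distrib, Finset.sum_add_distrib]
    have e1 : (∑ b, ∑ d, (if b = a' ∧ d = c then ε * (1 - δ b d) else 0))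
        = ε * (1 - δ a' c) := by
      rw [Finset.sum_eq_single a']
      · rw [Finset.sum_eq_single c] <;> simp +contextual
      · intro b _ hb; simp [hb]
      · simp
    have e2 : (∑ b, ∑ d, (if b = a ∧ d = c then ε * (1 - δ b d) else 0))
        = ε * (1 - δ a c) := by
      rw [Finset.sum_eq_single a]
      · rw [Finset.sum_eq_single c] <;> simp +contextual
      · intro b _ hb; simp [hb]
      · simp
    rw [e1, e2]; ring
  have := hmax y hyfeas
  nlinarith [mul_pos hεpos (sub_pos.mpr hδlt)]
end

section
/- Let δ be a valid perturbation profile. Then every feasible allocation x* that maximizes the perturbed objective V_δ over all feasible allocations also maximizes the size V over all feasible allocations. -/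
open Finset

lemma sum_ind_collapse {A C : Type*} [Fintype A] [Fintype C] [DecidableEq A] [DecidableEq C]
    (n : ℕ) (u : ℕ → A) (v : ℕ → C) (w : A → C → ℝ) :
    ∑ a, ∑ c, (∑ i ∈ Finset.range n, if a = u i ∧ c = v i then (1:ℝ) else 0) * w a c
      = ∑ i ∈ Finset.range n, w (u i) (v i) := by
  classical
  have h1 : ∀ a c, (∑ i ∈ Finset.range n, if a = u i ∧ c = v i then (1:ℝ) else 0) * w a c
      = ∑ i ∈ Finset.range n, if a = u i ∧ c = v i then w a c else 0 := by
    intro a c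
    rw [Finset.sum_mul]
    exact Finset.sum_congr rfl fun i _ => by by_cases h : a = u i ∧ c = v i <;> simp [h]
  simp_rw [h1]
  rw [Finset.sum_comm]
  have h2 : ∀ c, ∑ a, ∑ i ∈ Finset.range n, (if a = u i ∧ c = v i then w a c else 0)
      = ∑ i ∈ Finset.range n, ∑ a, (if a = u i ∧ c = v i then w a c else 0) :=
    fun c => Finset.sum_comm
  simp_rw [h2]
  rw [Finset.sum_comm]
  refine Finset.sum_congr rfl fun i _ => ?_
  rw [Finset.sum_comm]
  simp [ite_and, Finset.sum_ite_eq']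
lemma sum_ind_row {A C : Type*} [Fintype A] [Fintype C] [DecidableEq A] [DecidableEq C]
    (n : ℕ) (u : ℕ → A) (v : ℕ → C) (a : A) :
    ∑ c, (∑ i ∈ Finset.range n, if a = u i ∧ c = v i then (1:ℝ) else 0)
      = ∑ i ∈ Finset.range n, if a = u i then (1:ℝ) else 0 := by
  classical
  rw [Finset.sum_comm]
  refine Finset.sum_congr rfl fun i _ => ?_
  simp [ite_and, Finset.sum_ite_eq']
lemma sum_ind_col {A C : Type*} [Fintype A] [Fintype C] [DecidableEq A] [DecidableEq C]
    (n : ℕ) (u : ℕ → A) (v : ℕ → C) (c : C) :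
    ∑ a, (∑ i ∈ Finset.range n, if a = u i ∧ c = v i then (1:ℝ) else 0)
      = ∑ i ∈ Finset.range n, if c = v i then (1:ℝ) else 0 := by
  classical
  rw [Finset.sum_comm]
  refine Finset.sum_congr rfl fun i _ => ?_
  by_cases h : c = v i <;> simp [ite_and, h, Finset.sum_ite_eq']
lemma sum_ind_le_one {A : Type*} [DecidableEq A] (n : ℕ) (u : ℕ → A) (a : A)
    (hinj : ∀ i < n, ∀ j < n, u i = u j → i = j) :
    (∑ i ∈ Finset.range n, if a = u i then (1:ℝ) else 0) ≤ 1 := by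
  classical
  rw [Finset.sum_boole]
  have : ((Finset.range n).filter (fun i => a = u i)).card ≤ 1 := by
    refine Finset.card_le_one.2 fun i hi j hj => ?_
    simp only [Finset.mem_filter, Finset.mem_range] at hi hj
    exact hinj i hi.1 j hj.1 (hi.2 ▸ hj.2 ▸ rfl)
  exact_mod_cast this
lemma sum_ind_nonneg {α : Type*} (s : Finset α) (p : α → Prop) [DecidablePred p] :
    (0:ℝ) ≤ ∑ i ∈ s, if p i then (1:ℝ) else 0 :=
  Finset.sum_nonneg fun i _ => by by_cases h : p i <;> simp [h]
lemma sum_ind_pos_witness (n : ℕ) (p : ℕ → Prop) [DecidablePred p]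
    (h : (∑ i ∈ Finset.range n, if p i then (1:ℝ) else 0) ≠ 0) : ∃ i < n, p i := by
  by_contra hc
  push_neg at hc
  exact h (Finset.sum_eq_zero fun i hi => by
    simp [hc i (Finset.mem_range.1 hi)])

section Stmt4Aux

open Classical

variable {A C : Type*} [Fintype A] [Fintype C]

def IsWalk (I : AllocInstance A C) (x : A → C → ℝ) (k : ℕ) (f : ℕ → A) (g : ℕ → C) : Prop :=
  (∑ c', x (f 0) c') < 1 ∧
  (∀ i ≤ k, f i ∈ I.elig (g i)) ∧
  (∀ i < k, 0 < x (f (i+1)) (g i)) ∧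
  (∑ a', x a' (g k)) < (I.quota (g k) : ℝ)

/-- Residual reachability. -/
inductive Reach (I : AllocInstance A C) (x : A → C → ℝ) : A ⊕ C → Prop
  | slack (a : A) : (∑ c', x a c') < 1 → Reach I x (Sum.inl a)
  | toC (a : A) (c : C) : Reach I x (Sum.inl a) → a ∈ I.elig c → Reach I x (Sum.inr c)
  | toA (a : A) (c : C) : Reach I x (Sum.inr c) → 0 < x a c → Reach I x (Sum.inl a)

lemma reach_walk [Nonempty C] {I : AllocInstance A C} {x : A → C → ℝ} {v : A ⊕ C}
    (hr : Reach I x v) :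
    (∀ a, v = Sum.inl a → ∃ (k : ℕ) (f : ℕ → A) (g : ℕ → C), (∑ c', x (f 0) c') < 1 ∧
        (∀ i < k, f i ∈ I.elig (g i)) ∧ (∀ i < k, 0 < x (f (i+1)) (g i)) ∧ f k = a) ∧
    (∀ c, v = Sum.inr c → ∃ (k : ℕ) (f : ℕ → A) (g : ℕ → C), (∑ c', x (f 0) c') < 1 ∧
        (∀ i ≤ k, f i ∈ I.elig (g i)) ∧ (∀ i < k, 0 < x (f (i+1)) (g i)) ∧ g k = c) := by
  induction hr with
  | slack a h =>
    constructor
    · rintro a' ⟨rfl⟩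
      exact ⟨0, fun _ => a, fun _ => Classical.arbitrary C, h,
        fun i hi => absurd hi (by omega), fun i hi => absurd hi (by omega), rfl⟩
    · rintro c ⟨⟩
  | toC a c hra helig IH =>
    constructor
    · rintro a' ⟨⟩
    · rintro c' ⟨rfl⟩
      obtain ⟨k, f, g, h1, h2, h3, h4⟩ := IH.1 a rfl
      refine ⟨k, f, fun i => if i < k then g i else c, h1, ?_, ?_, by simp⟩
      · intro i hi
        rcases lt_or_eq_of_le hi with hi' | hi'
        · simpa [hi'] using h2 i hi'
        · subst hi'; simp [lt_irrefl, h4, helig]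
      · intro i hi; simpa [hi] using h3 i hi
  | toA a c hrc hxc IH =>
    constructor
    · rintro a' ⟨rfl⟩
      obtain ⟨k, f, g, h1, h2, h3, h4⟩ := IH.2 c rfl
      refine ⟨k + 1, fun i => if i ≤ k then f i else a, g, by simpa using h1, ?_, ?_, by simp⟩
      · intro i hi
        have : i ≤ k := by omega
        simpa [this] using h2 i this
      · intro i hi
        rcases Nat.lt_or_ge i k with hi' | hi'
        · have : i + 1 ≤ k := hi'
          simpa [this] using h3 i hi'
        · have hik : i = k := by omega
          have e1 : ¬ (i + 1 ≤ k) := by omega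
          have e2 : i ≤ k := by omega
          rw [hik] at e2 ⊢
          simpa [e1, hik, h4] using hxc
    · rintro c' ⟨⟩

lemma no_walk_cut [Nonempty C] {I : AllocInstance A C} {x : A → C → ℝ}
    (hnw : ¬ ∃ (k : ℕ) (f : ℕ → A) (g : ℕ → C), IsWalk I x k f g) (hx : I.Feasible x)
    (y : A → C → ℝ) (hy : I.Feasible y) : I.V y ≤ I.V x := by
  classical
  obtain ⟨hx0, hxe, hxq, hx1⟩ := hx
  obtain ⟨hy0, hye, hyq, hy1⟩ := hy
  set S : Finset A := Finset.univ.filter (fun a => Reach I x (Sum.inl a)) with hS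
  set T : Finset C := Finset.univ.filter (fun c => Reach I x (Sum.inr c)) with hT
  -- (i) rows outside S are tight
  have rowt : ∀ a ∉ S, ∑ c, x a c = 1 := by
    intro a ha
    have : ¬ Reach I x (Sum.inl a) := by simpa [hS] using ha
    have h1 : ¬ (∑ c', x a c') < 1 := fun h => this (Reach.slack a h)
    exact le_antisymm (hx1 a) (not_lt.1 h1)
  -- (ii)
  have memT : ∀ a ∈ S, ∀ c, a ∈ I.elig c → c ∈ T := by
    intro a ha c hc
    have : Reach I x (Sum.inl a) := by simpa [hS] using ha
    simp only [hT, Finset.mem_filter, Finset.mem_univ, true_and]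
    exact Reach.toC a c this hc
  -- (iii)
  have memS : ∀ c ∈ T, ∀ a, 0 < x a c → a ∈ S := by
    intro c hc a hxa
    have : Reach I x (Sum.inr c) := by simpa [hT] using hc
    simp only [hS, Finset.mem_filter, Finset.mem_univ, true_and]
    exact Reach.toA a c this hxa
  -- (iv) columns in T are tight
  have colt : ∀ c ∈ T, ∑ a, x a c = (I.quota c : ℝ) := by
    intro c hc
    refine le_antisymm (hxq c) (not_lt.1 fun hlt => ?_)
    have hr : Reach I x (Sum.inr c) := by simpa [hT] using hc
    obtain ⟨k, f, g, h1, h2, h3, h4⟩ := (reach_walk hr).2 c rfl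
    exact hnw ⟨k, f, g, h1, h2, h3, by rw [h4]; exact hlt⟩
  -- y vanishes on S × Tᶜ
  have yzero : ∀ a ∈ S, ∀ c ∉ T, y a c = 0 := by
    intro a ha c hc
    by_contra h
    have hpos : 0 < y a c := lt_of_le_of_ne (hy0 a c) (Ne.symm h)
    have : a ∈ I.elig c := by
      by_contra he; exact h (hye a c he)
    exact hc (memT a ha c this)
  -- x vanishes on Sᶜ × T
  have xzero : ∀ a ∉ S, ∀ c ∈ T, x a c = 0 := by
    intro a ha c hc
    by_contra h
    exact ha (memS c hc a (lt_of_le_of_ne (hx0 a c) (Ne.symm h)))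
  -- main chain
  have key1 : ∑ a ∈ S, ∑ c, y a c = ∑ a ∈ S, ∑ c ∈ T, y a c := by
    refine Finset.sum_congr rfl fun a ha => ?_
    rw [← Finset.sum_filter_add_sum_filter_not Finset.univ (fun c => c ∈ T)]
    have : ∑ c ∈ Finset.univ.filter (fun c => ¬ c ∈ T), y a c = 0 :=
      Finset.sum_eq_zero fun c hc => yzero a ha c (Finset.mem_filter.1 hc).2
    rw [this, add_zero]
    exact Finset.sum_congr (by ext c; simp [Finset.mem_filter]) (fun _ _ => rfl)
  have key2 : ∑ c ∈ T, ∑ a, x a c = ∑ a ∈ S, ∑ c ∈ T, x a c := by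
    have h' : ∀ c ∈ T, ∑ a, x a c = ∑ a ∈ S, x a c := by
      intro c hc
      rw [← Finset.sum_filter_add_sum_filter_not Finset.univ (fun a => a ∈ S)]
      have h0 : ∑ a ∈ Finset.univ.filter (fun a => ¬ a ∈ S), x a c = 0 :=
        Finset.sum_eq_zero fun a ha => xzero a (Finset.mem_filter.1 ha).2 c hc
      rw [h0, add_zero]
      exact Finset.sum_congr (by ext a; simp) fun _ _ => rfl
    rw [Finset.sum_congr rfl h', Finset.sum_comm]
  have main : ∑ a ∈ S, ∑ c, y a c ≤ ∑ a ∈ S, ∑ c, x a c := by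
    calc ∑ a ∈ S, ∑ c, y a c = ∑ a ∈ S, ∑ c ∈ T, y a c := key1
      _ = ∑ c ∈ T, ∑ a ∈ S, y a c := Finset.sum_comm
      _ ≤ ∑ c ∈ T, ∑ a, y a c := by
          refine Finset.sum_le_sum fun c _ => ?_
          exact Finset.sum_le_sum_of_subset_of_nonneg (Finset.subset_univ S)
            (fun a _ _ => hy0 a c)
      _ ≤ ∑ c ∈ T, (I.quota c : ℝ) := Finset.sum_le_sum fun c _ => hyq c
      _ = ∑ c ∈ T, ∑ a, x a c := Finset.sum_congr rfl fun c hc => (colt c hc).symm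
      _ = ∑ a ∈ S, ∑ c ∈ T, x a c := key2
      _ ≤ ∑ a ∈ S, ∑ c, x a c := by
          refine Finset.sum_le_sum fun a _ => ?_
          exact Finset.sum_le_sum_of_subset_of_nonneg (Finset.subset_univ T)
            (fun c _ _ => hx0 a c)
  have rest : ∑ a ∈ Finset.univ.filter (fun a => ¬ a ∈ S), ∑ c, y a c ≤
      ∑ a ∈ Finset.univ.filter (fun a => ¬ a ∈ S), ∑ c, x a c := by
    refine Finset.sum_le_sum fun a ha => ?_
    rw [rowt a (Finset.mem_filter.1 ha).2]
    exact hy1 a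
  have hsplit : ∀ z : A → C → ℝ, (∑ a, ∑ c, z a c) =
      (∑ a ∈ S, ∑ c, z a c) + ∑ a ∈ Finset.univ.filter (fun a => ¬ a ∈ S), ∑ c, z a c := by
    intro z
    rw [← Finset.sum_filter_add_sum_filter_not Finset.univ (fun a => a ∈ S)]
    congr 1
    exact Finset.sum_congr (by ext a; simp) fun _ _ => rfl
  show (∑ a, ∑ c, y a c) ≤ ∑ a, ∑ c, x a c
  rw [hsplit y, hsplit x]
  exact add_le_add main rest

lemma exists_inj_walk {I : AllocInstance A C} {x : A → C → ℝ}
    (hw : ∃ (k : ℕ) (f : ℕ → A) (g : ℕ → C), IsWalk I x k f g) :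
    ∃ (k : ℕ) (f : ℕ → A) (g : ℕ → C), IsWalk I x k f g ∧
      (∀ i ≤ k, ∀ j ≤ k, f i = f j → i = j) ∧
      (∀ i ≤ k, ∀ j ≤ k, g i = g j → i = j) := by
  classical
  let P : ℕ → Prop := fun k => ∃ (f : ℕ → A) (g : ℕ → C), IsWalk I x k f g
  have hP : ∃ k, P k := hw
  obtain ⟨f, g, hwk⟩ : P (Nat.find hP) := Nat.find_spec hP
  set k := Nat.find hP with hk
  have hmin : ∀ m < k, ¬ P m := fun m hm => Nat.find_min hP hm
  obtain ⟨w1, w2, w3, w4⟩ := hwk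
  have claimA : ∀ i j, i < j → j ≤ k → f i ≠ f j := by
    intro i j hij hjk heq
    set d := j - i with hd
    have hd1 : 1 ≤ d := by omega
    refine hmin (k - d) (by omega) ⟨fun m => if m < i then f m else f (m + d),
      fun m => if m < i then g m else g (m + d), ?_, ?_, ?_, ?_⟩
    · by_cases h0 : 0 < i
      · simpa [h0] using w1
      · have hi0 : i = 0 := by omega
        have hfd : f (0 + d) = f 0 := by
          rw [Nat.zero_add, show d = j by omega, ← heq, hi0]
        have hfd' : f d = f 0 := by simpa using hfd
        simpa [h0, hfd, hfd'] using w1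
    · intro m hm
      by_cases hmi : m < i
      · simpa [hmi] using w2 m (by omega)
      · simpa [hmi] using w2 (m + d) (by omega)
    · intro m hm
      by_cases hmi : m + 1 < i
      · have h1 : m < i := by omega
        simpa [hmi, h1] using w3 m (by omega)
      · by_cases hmi2 : m < i
        · -- m + 1 = i
          have hmi3 : m + 1 = i := by omega
          have : f (m + 1 + d) = f (m + 1) := by rw [hmi3]; rw [show i + d = j by omega, ← heq]
          simp only [if_neg hmi, if_pos hmi2, this]
          exact w3 m (by omega)
        · have h1 : ¬ (m + 1 < i) := by omega
          have e : m + 1 + d = m + d + 1 := by omega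
          simpa [h1, hmi2, e] using w3 (m + d) (by omega)
    · have h1 : ¬ (k - d < i) := by omega
      have h2 : k - d + d = k := by omega
      simpa [h1, h2] using w4
  have claimC : ∀ i j, i < j → j ≤ k → g i ≠ g j := by
    intro i j hij hjk heq
    set d := j - i with hd
    have hd1 : 1 ≤ d := by omega
    refine hmin (k - d) (by omega) ⟨fun m => if m ≤ i then f m else f (m + d),
      fun m => if m < i then g m else g (m + d), ?_, ?_, ?_, ?_⟩
    · simpa [Nat.zero_le i] using w1
    · intro m hm
      by_cases hmi : m < i
      · simpa [hmi, le_of_lt hmi] using w2 m (by omega)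
      · by_cases hmi2 : m ≤ i
        · have hmi3 : m = i := by omega
          have : g (m + d) = g m := by rw [hmi3, show i + d = j by omega, ← heq]
          simp only [if_pos hmi2, if_neg hmi, this]
          exact w2 m (by omega)
        · have h1 : ¬ (m < i) := by omega
          simpa [hmi2, h1] using w2 (m + d) (by omega)
    · intro m hm
      by_cases hmi : m < i
      · simpa [hmi, show m + 1 ≤ i from hmi] using w3 m (by omega)
      · have h1 : ¬ (m + 1 ≤ i) := by omega
        have e : m + 1 + d = m + d + 1 := by omega
        simpa [h1, hmi, e] using w3 (m + d) (by omega)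
    · have h1 : ¬ (k - d < i) := by omega
      have h2 : k - d + d = k := by omega
      simpa [h1, h2] using w4
  refine ⟨k, f, g, ⟨w1, w2, w3, w4⟩, ?_, ?_⟩
  · intro i hi j hj heq
    rcases lt_trichotomy i j with h | h | h
    · exact absurd heq (claimA i j h hj)
    · exact h
    · exact absurd heq.symm (claimA j i h hi)
  · intro i hi j hj heq
    rcases lt_trichotomy i j with h | h | h
    · exact absurd heq (claimC i j h hj)
    · exact h
    · exact absurd heq.symm (claimC j i h hi)

lemma walk_augment {I : AllocInstance A C} {x δ : A → C → ℝ}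
    (hδ : I.ValidPerturbation δ) (hx : I.Feasible x)
    {k : ℕ} {f : ℕ → A} {g : ℕ → C} (hw : IsWalk I x k f g)
    (hfa : ∀ i ≤ k, ∀ j ≤ k, f i = f j → i = j)
    (hga : ∀ i ≤ k, ∀ j ≤ k, g i = g j → i = j) :
    ∃ x', I.Feasible x' ∧ I.Vd δ x < I.Vd δ x' := by
  classical
  obtain ⟨hx0, hxe, hxq, hx1⟩ := hx
  obtain ⟨hδpos, hδsum, _⟩ := hδ
  obtain ⟨w1, w2, w3, w4⟩ := hw
  -- the augmentation amount
  set s : Finset ℝ := insert (1 - ∑ c', x (f 0) c')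
    (insert ((I.quota (g k) : ℝ) - ∑ a', x a' (g k))
      ((Finset.range k).image fun i => x (f (i+1)) (g i))) with hs
  have hsne : s.Nonempty := ⟨_, Finset.mem_insert_self _ _⟩
  set t : ℝ := s.min' hsne with hts
  have ht_pos : 0 < t := by
    rw [hts, Finset.lt_min'_iff]
    intro b hb
    rw [hs] at hb
    simp only [Finset.mem_insert, Finset.mem_image, Finset.mem_range] at hb
    rcases hb with rfl | rfl | ⟨i, hi, rfl⟩
    · linarith
    · linarith
    · exact w3 i hi
  have ht1 : t ≤ 1 - ∑ c', x (f 0) c' := Finset.min'_le _ _ (by rw [hs]; exact Finset.mem_insert_self _ _)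
  have ht2 : t ≤ (I.quota (g k) : ℝ) - ∑ a', x a' (g k) := by
    refine Finset.min'_le _ _ ?_
    rw [hs]
    exact Finset.mem_insert_of_mem (Finset.mem_insert_self _ _)
  have ht3 : ∀ i < k, t ≤ x (f (i+1)) (g i) := by
    intro i hi
    refine Finset.min'_le _ _ ?_
    rw [hs]
    refine Finset.mem_insert_of_mem (Finset.mem_insert_of_mem ?_)
    exact Finset.mem_image.2 ⟨i, Finset.mem_range.2 hi, rfl⟩
  -- the increment and decrement indicator sums
  set inc : A → C → ℝ :=
    fun a c => ∑ i ∈ Finset.range (k+1), if a = f i ∧ c = g i then (1:ℝ) else 0 with hinc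
  set dec : A → C → ℝ :=
    fun a c => ∑ i ∈ Finset.range k, if a = f (i+1) ∧ c = g i then (1:ℝ) else 0 with hdec
  have inc_nonneg : ∀ a c, 0 ≤ inc a c := fun a c => sum_ind_nonneg _ _
  have dec_nonneg : ∀ a c, 0 ≤ dec a c := fun a c => sum_ind_nonneg _ _
  have inc_le_one : ∀ a c, inc a c ≤ 1 := by
    intro a c
    rw [hinc]
    calc (∑ i ∈ Finset.range (k+1), if a = f i ∧ c = g i then (1:ℝ) else 0)
        ≤ ∑ i ∈ Finset.range (k+1), if a = f i then (1:ℝ) else 0 := by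
          refine Finset.sum_le_sum fun i _ => ?_
          by_cases h2 : a = f i <;> by_cases h3 : c = g i <;> simp [h2, h3]
      _ ≤ 1 := sum_ind_le_one (k+1) f a (fun i hi j hj h =>
          hfa i (by omega) j (by omega) h)
  have dec_le_one : ∀ a c, dec a c ≤ 1 := by
    intro a c
    rw [hdec]
    calc (∑ i ∈ Finset.range k, if a = f (i+1) ∧ c = g i then (1:ℝ) else 0)
        ≤ ∑ i ∈ Finset.range k, if a = f (i+1) then (1:ℝ) else 0 := by
          refine Finset.sum_le_sum fun i _ => ?_
          by_cases h2 : a = f (i+1) <;> by_cases h3 : c = g i <;> simp [h2, h3]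
      _ ≤ 1 := sum_ind_le_one k (fun i => f (i+1)) a (fun i hi j hj h => by
          have := hfa (i+1) (by omega) (j+1) (by omega) h
          omega)
  have dec_witness : ∀ a c, dec a c ≠ 0 → ∃ i < k, a = f (i+1) ∧ c = g i :=
    fun a c h => sum_ind_pos_witness k _ h
  have inc_witness : ∀ a c, inc a c ≠ 0 → ∃ i < k + 1, a = f i ∧ c = g i :=
    fun a c h => sum_ind_pos_witness (k+1) _ h
  -- the improved allocation
  set x' : A → C → ℝ := fun a c => x a c + t * (inc a c - dec a c) with hx'
  have hrow : ∀ a, ∑ c, x' a c = (∑ c, x a c) + t * (if a = f 0 then (1:ℝ) else 0) := by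
    intro a
    rw [hx']
    simp only
    rw [Finset.sum_add_distrib, ← Finset.mul_sum]
    congr 1
    rw [Finset.sum_sub_distrib]
    rw [hinc, hdec]
    rw [sum_ind_row (k+1) f g a, sum_ind_row k (fun i => f (i+1)) g a]
    rw [Finset.sum_range_succ' (fun i => if a = f i then (1:ℝ) else 0) k]
    ring
  have hcol : ∀ c, ∑ a, x' a c = (∑ a, x a c) + t * (if c = g k then (1:ℝ) else 0) := by
    intro c
    rw [hx']
    simp only
    rw [Finset.sum_add_distrib, ← Finset.mul_sum]
    congr 1
    rw [Finset.sum_sub_distrib]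
    rw [hinc, hdec]
    rw [sum_ind_col (k+1) f g c, sum_ind_col k (fun i => f (i+1)) g c]
    rw [Finset.sum_range_succ (fun i => if c = g i then (1:ℝ) else 0) k]
    ring
  refine ⟨x', ⟨?_, ?_, ?_, ?_⟩, ?_⟩
  · -- nonnegativity
    intro a c
    rw [hx']
    simp only
    by_cases hd : dec a c = 0
    · nlinarith [inc_nonneg a c, hx0 a c, ht_pos.le]
    · obtain ⟨i, hi, rfl, rfl⟩ := dec_witness a c hd
      have := ht3 i hi
      nlinarith [inc_nonneg (f (i+1)) (g i), dec_le_one (f (i+1)) (g i), ht_pos.le]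
  · -- eligibility
    intro a c he
    have hxz : x a c = 0 := hxe a c he
    have hdz : dec a c = 0 := by
      by_contra hd
      obtain ⟨i, hi, rfl, rfl⟩ := dec_witness a c hd
      exact absurd hxz (ne_of_gt (w3 i hi))
    have hiz : inc a c = 0 := by
      by_contra hd
      obtain ⟨i, hi, rfl, rfl⟩ := inc_witness a c hd
      exact he (w2 i (by omega))
    have hb : x' a c = x a c + t * (inc a c - dec a c) := rfl
    rw [hb, hxz, hdz, hiz]
    ring
  · -- quota
    intro c
    rw [hcol c]
    by_cases hc : c = g k
    · rw [if_pos hc, mul_one, hc]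
      linarith [ht2]
    · simp only [if_neg hc, mul_zero, add_zero]
      exact hxq c
  · -- unit demand
    intro a
    rw [hrow a]
    by_cases ha : a = f 0
    · rw [if_pos ha, mul_one, ha]
      linarith [ht1]
    · simp only [if_neg ha, mul_zero, add_zero]
      exact hx1 a
  · -- the perturbed objective strictly increases
    have hVd : I.Vd δ x' = I.Vd δ x +
        t * ((∑ i ∈ Finset.range (k+1), (1 - δ (f i) (g i))) -
             ∑ i ∈ Finset.range k, (1 - δ (f (i+1)) (g i))) := by
      rw [AllocInstance.Vd, AllocInstance.Vd]
      have hsplit : ∀ a c, x' a c * (1 - δ a c) =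
          x a c * (1 - δ a c) + t * (inc a c * (1 - δ a c)) - t * (dec a c * (1 - δ a c)) := by
        intro a c
        rw [hx']
        ring
      simp_rw [hsplit]
      simp_rw [Finset.sum_sub_distrib, Finset.sum_add_distrib, ← Finset.mul_sum]
      rw [hinc, hdec]
      rw [sum_ind_collapse (k+1) f g (fun a c => 1 - δ a c),
        sum_ind_collapse k (fun i => f (i+1)) g (fun a c => 1 - δ a c)]
      simp only [Finset.sum_sub_distrib]
      ring
    have hSinc : (∑ i ∈ Finset.range (k+1), δ (f i) (g i)) ≤ 1/2 := by
      have hinj : ∀ i ∈ Finset.range (k+1), ∀ j ∈ Finset.range (k+1),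
          (fun i => (f i, g i)) i = (fun i => (f i, g i)) j → i = j := by
        intro i hi j hj h
        simp only [Prod.mk.injEq] at h
        simp only [Finset.mem_range] at hi hj
        exact hfa i (by omega) j (by omega) h.1
      have him : ∑ p ∈ (Finset.range (k+1)).image (fun i => (f i, g i)), δ p.1 p.2
          = ∑ i ∈ Finset.range (k+1), δ (f i) (g i) := Finset.sum_image hinj
      calc (∑ i ∈ Finset.range (k+1), δ (f i) (g i))
          = ∑ p ∈ (Finset.range (k+1)).image (fun i => (f i, g i)), δ p.1 p.2 := him.symm
        _ ≤ ∑ p : A × C, δ p.1 p.2 :=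
            Finset.sum_le_sum_of_subset_of_nonneg (Finset.subset_univ _)
              (fun p _ _ => (hδpos p.1 p.2).le)
        _ = ∑ a, ∑ c, δ a c := Fintype.sum_prod_type _
        _ ≤ 1/2 := by linarith [hδsum]
    have hSdec : (0:ℝ) ≤ ∑ i ∈ Finset.range k, δ (f (i+1)) (g i) :=
      Finset.sum_nonneg fun i _ => (hδpos _ _).le
    have expand1 : (∑ i ∈ Finset.range (k+1), (1 - δ (f i) (g i)))
        = (k+1 : ℝ) - ∑ i ∈ Finset.range (k+1), δ (f i) (g i) := by
      rw [Finset.sum_sub_distrib]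
      simp
    have expand2 : (∑ i ∈ Finset.range k, (1 - δ (f (i+1)) (g i)))
        = (k : ℝ) - ∑ i ∈ Finset.range k, δ (f (i+1)) (g i) := by
      rw [Finset.sum_sub_distrib]
      simp
    rw [hVd, expand1, expand2]
    have : (1:ℝ)/2 ≤ (k+1 : ℝ) - (∑ i ∈ Finset.range (k+1), δ (f i) (g i)) -
        ((k : ℝ) - ∑ i ∈ Finset.range k, δ (f (i+1)) (g i)) := by
      linarith
    nlinarith

end Stmt4Aux

/-- every maximizer of the perturbed objective `V_δ` (for a valid
perturbation `δ`) also maximizes the size `V` over feasible allocations. -/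
theorem stmt4 {A C : Type*} [Fintype A] [Fintype C] (I : AllocInstance A C)
    (hpre : I.TotalPreorder) (δ : A → C → ℝ) (hδ : I.ValidPerturbation δ)
    (xstar : A → C → ℝ) (hfeas : I.Feasible xstar)
    (hmax : ∀ y, I.Feasible y → I.Vd δ y ≤ I.Vd δ xstar) :
    ∀ y, I.Feasible y → I.V y ≤ I.V xstar := by
  intro y hy
  rcases isEmpty_or_nonempty C with hC | hC
  · simp [AllocInstance.V]
  by_cases hw : ∃ k f g, IsWalk I xstar k f g
  · obtain ⟨k, f, g, hwk, hfa, hga⟩ := exists_inj_walk hw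
    obtain ⟨x', hx', hlt⟩ := walk_augment hδ hfeas hwk hfa hga
    exact absurd (hmax x' hx') (not_le.2 hlt)
  · exact no_walk_cut hw hfeas y hy
end

section
/- Let V* be the maximum of the size V over all feasible allocations. Then for any priority orders (≽_c)_{c∈C}, every valid allocation x satisfies V(x) = V*. In particular, every valid allocation is a maximum-size feasible allocation. -/
open Finset

namespace Stmt5Aux

open AllocInstance

variable {A C : Type*} [Fintype A] [Fintype C]

/-- auxiliary: an alternating partial path -/
def IsPath (I : AllocInstance A C) (x : A → C → ℝ) (k : ℕ) (c : ℕ → C) (a : ℕ → A) : Prop :=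
  1 ≤ k ∧ (∑ p, x p (c 0)) < (I.quota (c 0) : ℝ) ∧
  (∀ i < k, a (i + 1) ∈ I.elig (c i)) ∧
  (∀ i, 1 ≤ i → i < k → 0 < x (a i) (c i))

def IsAug (I : AllocInstance A C) (x : A → C → ℝ) (k : ℕ) (c : ℕ → C) (a : ℕ → A) : Prop :=
  IsPath I x k c a ∧ (∑ q, x (a k) q) < 1

lemma count (I : AllocInstance A C) (x xh : A → C → ℝ)
    (hx : I.Feasible x) (hxh : I.Feasible xh)
    (hno : ¬ ∃ k c a, IsAug I x k c a) : I.V xh ≤ I.V x := by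
  classical
  set ReachA : A → Prop := fun p => ∃ k c a, IsPath I x k c a ∧ a k = p with hRA
  set ReachC : C → Prop := fun q => (∑ p, x p q) < (I.quota q : ℝ) ∨ ∃ p, ReachA p ∧ 0 < x p q
    with hRC
  have hL1 : ∀ q, ReachC q → ∀ p ∈ I.elig q, ReachA p := by
    intro q hq p hp
    rcases hq with hq | ⟨p₀, ⟨k, c, a, hpath, hend⟩, hpos⟩
    · exact ⟨1, fun _ => q, fun _ => p,
        ⟨le_refl 1, hq, fun i _ => hp, fun i h1 h2 => absurd h2 (by omega)⟩, rfl⟩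
    · have hk1 : 1 ≤ k := hpath.1
      refine ⟨k + 1, Function.update c k q, Function.update a (k + 1) p, ⟨by omega, ?_, ?_, ?_⟩, ?_⟩
      · rw [Function.update_of_ne (by omega)]; exact hpath.2.1
      · intro i hi
        rcases Nat.lt_or_ge i k with h | h
        · rw [Function.update_of_ne (by omega), Function.update_of_ne (by omega)]
          exact hpath.2.2.1 i h
        · have : i = k := by omega
          subst this
          rw [Function.update_self, Function.update_self]; exact hp
      · intro i h1 h2
        rcases Nat.lt_or_ge i k with h | h
        · rw [Function.update_of_ne (by omega), Function.update_of_ne (by omega)]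
          exact hpath.2.2.2 i h1 h
        · have : i = k := by omega
          subst this
          rw [Function.update_of_ne (by omega), Function.update_self, hend]; exact hpos
      · rw [Function.update_self]
  have hL4 : ∀ p, ReachA p → (∑ q, x p q) = 1 := by
    intro p ⟨k, c, a, hpath, hend⟩
    by_contra hne
    exact hno ⟨k, c, a, hpath, lt_of_le_of_ne (hend ▸ hx.2.2.2 p) (hend ▸ hne)⟩
  have hL2 : ∀ p q, ReachA p → ¬ ReachC q → x p q = 0 := by
    intro p q hp hq
    by_contra hne
    exact hq (Or.inr ⟨p, hp, lt_of_le_of_ne (hx.1 p q) (Ne.symm hne)⟩)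
  have hL3 : ∀ q, ¬ ReachC q → (∑ p, x p q) = (I.quota q : ℝ) :=
    fun q hq => le_antisymm (hx.2.2.1 q) (not_lt.1 fun h => hq (Or.inl h))
  set AR : Finset A := univ.filter ReachA with hAR
  set CR : Finset C := univ.filter ReachC with hCR
  have hx0CR : ∀ p, ∀ q ∈ CR, p ∉ AR → x p q = 0 ∧ xh p q = 0 := by
    intro p q hq hp
    have hq' : ReachC q := (mem_filter.1 hq).2
    have : p ∉ I.elig q := fun h => hp (mem_filter.2 ⟨mem_univ _, hL1 q hq' p h⟩)
    exact ⟨hx.2.1 p q this, hxh.2.1 p q this⟩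
  have key1 : ∑ q ∈ CR, ∑ p, xh p q ≤ ∑ q ∈ CR, ∑ p, x p q := by
    have e1 : ∑ q ∈ CR, ∑ p, xh p q = ∑ p ∈ AR, ∑ q ∈ CR, xh p q :=
      calc ∑ q ∈ CR, ∑ p, xh p q = ∑ q ∈ CR, ∑ p ∈ AR, xh p q :=
            Finset.sum_congr rfl fun q hq => (Finset.sum_subset (subset_univ AR)
              fun p _ hp => (hx0CR p q hq hp).2).symm
        _ = ∑ p ∈ AR, ∑ q ∈ CR, xh p q := Finset.sum_comm
    have e2 : ∑ q ∈ CR, ∑ p, x p q = ∑ p ∈ AR, ∑ q ∈ CR, x p q :=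
      calc ∑ q ∈ CR, ∑ p, x p q = ∑ q ∈ CR, ∑ p ∈ AR, x p q :=
            Finset.sum_congr rfl fun q hq => (Finset.sum_subset (subset_univ AR)
              fun p _ hp => (hx0CR p q hq hp).1).symm
        _ = ∑ p ∈ AR, ∑ q ∈ CR, x p q := Finset.sum_comm
    rw [e1, e2]
    refine Finset.sum_le_sum fun p hp => ?_
    have hpR : ReachA p := (mem_filter.1 hp).2
    have h1 : ∑ q ∈ CR, xh p q ≤ 1 :=
      le_trans (Finset.sum_le_sum_of_subset_of_nonneg (subset_univ CR)
        fun q _ _ => hxh.1 p q) (hxh.2.2.2 p)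
    have h2 : ∑ q ∈ CR, x p q = 1 := by
      rw [Finset.sum_subset (subset_univ CR)
        fun q _ hq => hL2 p q hpR fun h => hq (mem_filter.2 ⟨mem_univ _, h⟩)]
      exact hL4 p hpR
    rw [h2]; exact h1
  have key2 : ∑ q ∈ univ.filter (fun q => ¬ ReachC q), ∑ p, xh p q
      ≤ ∑ q ∈ univ.filter (fun q => ¬ ReachC q), ∑ p, x p q :=
    Finset.sum_le_sum fun q hq => by
      rw [hL3 q (mem_filter.1 hq).2]; exact hxh.2.2.1 q
  calc I.V xh = ∑ q, ∑ p, xh p q := Finset.sum_comm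
    _ = (∑ q ∈ CR, ∑ p, xh p q) + ∑ q ∈ univ.filter (fun q => ¬ ReachC q), ∑ p, xh p q :=
        (Finset.sum_filter_add_sum_filter_not univ ReachC _).symm
    _ ≤ (∑ q ∈ CR, ∑ p, x p q) + ∑ q ∈ univ.filter (fun q => ¬ ReachC q), ∑ p, x p q :=
        add_le_add key1 key2
    _ = ∑ q, ∑ p, x p q := Finset.sum_filter_add_sum_filter_not univ ReachC _
    _ = I.V x := Finset.sum_comm

lemma exists_max (I : AllocInstance A C) (hpre : I.TotalPreorder) (cc : C) :
    ∀ s : Finset A, (∀ p ∈ s, p ∈ I.elig cc) → s.Nonempty →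
      ∃ m ∈ s, ∀ b ∈ s, I.prio cc m b := by
  classical
  intro s
  induction s using Finset.induction with
  | empty => exact fun _ h => absurd h (by simp)
  | @insert a s hnot ih =>
    intro hsub _
    have ha : a ∈ I.elig cc := hsub a (mem_insert_self a s)
    by_cases hs : s.Nonempty
    · obtain ⟨m, hm, hmax⟩ := ih (fun p hp => hsub p (mem_insert_of_mem hp)) hs
      have hm' : m ∈ I.elig cc := hsub m (mem_insert_of_mem hm)
      rcases hpre.2.2 cc a ha m hm' with h | h
      · refine ⟨a, mem_insert_self a s, fun b hb => ?_⟩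
        rcases mem_insert.1 hb with hb | hb
        · rw [hb]; exact hpre.1 cc a ha
        · exact hpre.2.1 cc a ha m hm' b (hsub b (mem_insert_of_mem hb)) h (hmax b hb)
      · refine ⟨m, mem_insert_of_mem hm, fun b hb => ?_⟩
        rcases mem_insert.1 hb with hb | hb
        · rw [hb]; exact h
        · exact hmax b hb
    · have hse : s = ∅ := not_nonempty_iff_eq_empty.1 hs
      subst hse
      refine ⟨a, mem_insert_self a _, fun b hb => ?_⟩
      rcases mem_insert.1 hb with hb | hb
      · rw [hb]; exact hpre.1 cc a ha
      · exact absurd hb (by simp)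

end Stmt5Aux

/-- every valid allocation has size equal to the maximum size `V*`
over all feasible allocations; in particular it is a maximum-size allocation. -/
theorem stmt5 {A C : Type*} [Fintype A] [Fintype C] (I : AllocInstance A C)
    (hpre : I.TotalPreorder)
    (xhat : A → C → ℝ) (hxh : I.Feasible xhat)
    (hmaxV : ∀ y, I.Feasible y → I.V y ≤ I.V xhat)
    (x : A → C → ℝ) (hx : I.Valid x) :
    I.V x = I.V xhat := by
  classical
  obtain ⟨hxF, hxPR, hxPE⟩ := hx
  by_contra hne
  have hlt : I.V x < I.V xhat := lt_of_le_of_ne (hmaxV x hxF) hne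
  have haug : ∃ k, ∃ c : ℕ → C, ∃ a : ℕ → A, Stmt5Aux.IsAug I x k c a := by
    by_contra h
    push_neg at h
    refine absurd (Stmt5Aux.count I x xhat hxF hxh ?_) (not_le.2 hlt)
    rintro ⟨k, c, a, hk⟩
    exact h k c a hk
  obtain ⟨k₀, hmin, c, a₀, hP⟩ :
      ∃ k, (∀ j < k, ¬ ∃ c a, Stmt5Aux.IsAug I x j c a) ∧ ∃ c a, Stmt5Aux.IsAug I x k c a :=
    ⟨Nat.find haug, fun j hj h => Nat.find_min haug hj (by rcases h with ⟨c, a, h⟩; exact ⟨c, a, h⟩),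
      Nat.find_spec haug⟩
  obtain ⟨⟨hk1, hslack0, hfwd, hbwd⟩, hend⟩ := hP
  obtain ⟨n, rfl⟩ : ∃ n, k₀ = n + 1 := ⟨k₀ - 1, by omega⟩
  -- endpoint replacement
  have helig_end : a₀ (n + 1) ∈ I.elig (c n) := hfwd n (by omega)
  set S : Finset A := univ.filter (fun p => p ∈ I.elig (c n) ∧ ∑ q, x p q < 1) with hS
  have hSne : a₀ (n + 1) ∈ S := mem_filter.2 ⟨mem_univ _, helig_end, hend⟩
  have hSsub : ∀ p ∈ S, p ∈ I.elig (c n) := fun p hp => (mem_filter.1 hp).2.1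
  obtain ⟨astar, hastarS, hmax⟩ := Stmt5Aux.exists_max I hpre (c n) S hSsub ⟨_, hSne⟩
  set a : ℕ → A := Function.update a₀ (n + 1) astar with ha
  have hfwd' : ∀ i < n + 1, a (i + 1) ∈ I.elig (c i) := by
    intro i hi
    by_cases h : i = n
    · subst h; rw [ha, Function.update_self]; exact hSsub _ hastarS
    · rw [ha, Function.update_of_ne (by omega)]; exact hfwd i hi
  have hbwd' : ∀ i, 1 ≤ i → i < n + 1 → 0 < x (a i) (c i) := fun i h1 h2 => by
    rw [ha, Function.update_of_ne (by omega)]; exact hbwd i h1 h2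
  have hendS : a (n + 1) ∈ S := by rw [ha, Function.update_self]; exact hastarS
  have hend' : ∑ q, x (a (n + 1)) q < 1 := (mem_filter.1 hendS).2.2
  -- epsilon
  set T : Finset ℝ := insert 1 ((Finset.Ico 1 (n + 1)).image fun i => x (a i) (c i)) with hT
  have hTne : T.Nonempty := insert_nonempty _ _
  set M : ℝ := min ((I.quota (c 0) : ℝ) - ∑ p, x p (c 0))
      (min (1 - ∑ q, x (a (n + 1)) q) (T.min' hTne)) with hM
  have hTpos : ∀ t ∈ T, 0 < t := by
    intro t ht
    rcases mem_insert.1 ht with rfl | ht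
    · norm_num
    · obtain ⟨i, hi, rfl⟩ := mem_image.1 ht
      exact hbwd' i (mem_Ico.1 hi).1 (mem_Ico.1 hi).2
  have hMpos : 0 < M :=
    lt_min (by linarith [hslack0]) (lt_min (by linarith [hend']) (hTpos _ (min'_mem _ _)))
  set ε : ℝ := M / (n + 1) with hε
  have hεpos : 0 < ε := div_pos hMpos (by positivity)
  have hkε : ((n : ℝ) + 1) * ε = M := by
    rw [hε]; field_simp
  have hεM : ε ≤ M := by nlinarith
  have hM1 : M ≤ (I.quota (c 0) : ℝ) - ∑ p, x p (c 0) := min_le_left _ _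
  have hM2 : M ≤ 1 - ∑ q, x (a (n + 1)) q := le_trans (min_le_right _ _) (min_le_left _ _)
  have hM3 : ∀ i, 1 ≤ i → i < n + 1 → M ≤ x (a i) (c i) := by
    intro i h1 h2
    refine le_trans (le_trans (min_le_right _ _) (min_le_right _ _)) ?_
    exact Finset.min'_le T _ (mem_insert_of_mem (mem_image.2 ⟨i, mem_Ico.2 ⟨h1, h2⟩, rfl⟩))
  -- the improving allocation
  set S1 : A → C → ℝ :=
    fun p q => ∑ i ∈ Finset.range (n + 1), if p = a (i + 1) ∧ q = c i then (1 : ℝ) else 0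
    with hS1
  set S2 : A → C → ℝ :=
    fun p q => ∑ i ∈ Finset.range (n + 1), if 1 ≤ i ∧ p = a i ∧ q = c i then (1 : ℝ) else 0
    with hS2
  have hS1nn : ∀ p q, 0 ≤ S1 p q := fun p q =>
    Finset.sum_nonneg fun i _ => by positivity
  have hS2nn : ∀ p q, 0 ≤ S2 p q := fun p q =>
    Finset.sum_nonneg fun i _ => by positivity
  have hS2ub : ∀ p q, S2 p q ≤ (n : ℝ) + 1 := by
    intro p q
    calc S2 p q ≤ ∑ i ∈ Finset.range (n + 1), (1 : ℝ) :=
          Finset.sum_le_sum fun i _ => by split <;> norm_num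
      _ = (n : ℝ) + 1 := by simp
  have hS2wit : ∀ p q, S2 p q ≠ 0 → ((n : ℝ) + 1) * ε ≤ x p q := by
    intro p q h
    obtain ⟨i, hi, hterm⟩ := Finset.exists_ne_zero_of_sum_ne_zero h
    have hcond : 1 ≤ i ∧ p = a i ∧ q = c i := by
      by_contra hc; rw [if_neg hc] at hterm; exact hterm rfl
    obtain ⟨h1, rfl, rfl⟩ := hcond
    rw [hkε]
    exact hM3 i h1 (mem_range.1 hi)
  set y : A → C → ℝ := fun p q => x p q + ε * S1 p q - ε * S2 p q with hy
  -- row and column sums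
  have hrowS1 : ∀ p, ∑ q, S1 p q
      = ∑ i ∈ Finset.range (n + 1), (if p = a (i + 1) then (1 : ℝ) else 0) := by
    intro p
    rw [hS1]
    rw [Finset.sum_comm]
    refine Finset.sum_congr rfl fun i _ => ?_
    by_cases hpa : p = a (i + 1)
    · simp [hpa]
    · simp [hpa]
  have hrowS2 : ∀ p, ∑ q, S2 p q
      = ∑ i ∈ Finset.range (n + 1), (if 1 ≤ i ∧ p = a i then (1 : ℝ) else 0) := by
    intro p
    rw [hS2, Finset.sum_comm]
    refine Finset.sum_congr rfl fun i _ => ?_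
    by_cases hpa : 1 ≤ i ∧ p = a i
    · simp [hpa.1, hpa.2]
    · simp only [not_and] at hpa
      by_cases h1 : 1 ≤ i
      · simp [h1, hpa h1]
      · simp [h1]
  have hrow : ∀ p, ∑ q, y p q = (∑ q, x p q) + (if p = a (n + 1) then ε else 0) := by
    intro p
    have : ∑ q, y p q = (∑ q, x p q) + ε * (∑ q, S1 p q) - ε * (∑ q, S2 p q) := by
      rw [hy]
      simp only []
      rw [Finset.sum_sub_distrib, Finset.sum_add_distrib, ← Finset.mul_sum, ← Finset.mul_sum]
    rw [this, hrowS1, hrowS2]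
    rw [Finset.sum_range_succ (fun i => if p = a (i + 1) then (1 : ℝ) else 0) n,
      Finset.sum_range_succ' (fun i => if 1 ≤ i ∧ p = a i then (1 : ℝ) else 0) n]
    have e : ∀ i, (if 1 ≤ i + 1 ∧ p = a (i + 1) then (1 : ℝ) else 0)
        = (if p = a (i + 1) then (1 : ℝ) else 0) := by
      intro i; congr 1; simp [Nat.le_add_left]
    simp only [e]
    by_cases hpa : p = a (n + 1) <;> simp [hpa] <;> ring
  have hcol : ∀ q, ∑ p, y p q = (∑ p, x p q) + (if q = c 0 then ε else 0) := by
    intro q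
    have hcolS1 : ∑ p, S1 p q
        = ∑ i ∈ Finset.range (n + 1), (if q = c i then (1 : ℝ) else 0) := by
      rw [hS1, Finset.sum_comm]
      refine Finset.sum_congr rfl fun i _ => ?_
      by_cases hqc : q = c i
      · simp [hqc]
      · simp [hqc]
    have hcolS2 : ∑ p, S2 p q
        = ∑ i ∈ Finset.range (n + 1), (if 1 ≤ i ∧ q = c i then (1 : ℝ) else 0) := by
      rw [hS2, Finset.sum_comm]
      refine Finset.sum_congr rfl fun i _ => ?_
      by_cases hqc : 1 ≤ i ∧ q = c i
      · simp [hqc.1, hqc.2]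
      · simp only [not_and] at hqc
        by_cases h1 : 1 ≤ i
        · simp [h1, hqc h1]
        · simp [h1]
    have : ∑ p, y p q = (∑ p, x p q) + ε * (∑ p, S1 p q) - ε * (∑ p, S2 p q) := by
      rw [hy]
      simp only []
      rw [Finset.sum_sub_distrib, Finset.sum_add_distrib, ← Finset.mul_sum, ← Finset.mul_sum]
    rw [this, hcolS1, hcolS2]
    rw [Finset.sum_range_succ' (fun i => if q = c i then (1 : ℝ) else 0) n,
      Finset.sum_range_succ' (fun i => if 1 ≤ i ∧ q = c i then (1 : ℝ) else 0) n]
    have e : ∀ i, (if 1 ≤ i + 1 ∧ q = c (i + 1) then (1 : ℝ) else 0)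
        = (if q = c (i + 1) then (1 : ℝ) else 0) := by
      intro i; congr 1; simp [Nat.le_add_left]
    simp only [e]
    by_cases hqc : q = c 0 <;> simp [hqc] <;> ring
  -- feasibility of y
  have hynn : ∀ p q, 0 ≤ y p q := by
    intro p q
    rw [hy]; simp only []
    by_cases h : S2 p q = 0
    · have := hxF.1 p q
      have h1 := hS1nn p q
      rw [h]
      nlinarith
    · have h1 := hS2wit p q h
      have h2 := hS2ub p q
      have h3 := hS1nn p q
      nlinarith
  have hyER : ∀ p q, p ∉ I.elig q → y p q = 0 := by
    intro p q h
    have hS1z : S1 p q = 0 := by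
      refine Finset.sum_eq_zero fun i hi => ?_
      rw [if_neg]
      rintro ⟨h1, h2⟩
      exact h (h2 ▸ h1 ▸ hfwd' i (mem_range.1 hi))
    have hS2z : S2 p q = 0 := by
      refine Finset.sum_eq_zero fun i hi => ?_
      rw [if_neg]
      rintro ⟨h1, h2, h3⟩
      have hpos : 0 < x p q := h3 ▸ h2 ▸ hbwd' i h1 (mem_range.1 hi)
      rw [hxF.2.1 p q h] at hpos
      exact lt_irrefl 0 hpos
    rw [hy]; simp only []
    rw [hS1z, hS2z, hxF.2.1 p q h]; ring
  have hyQR : ∀ q, ∑ p, y p q ≤ (I.quota q : ℝ) := by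
    intro q
    rw [hcol]
    by_cases h : q = c 0
    · subst h
      have := hxF.2.2.1 (c 0)
      rw [if_pos rfl]
      linarith
    · rw [if_neg h, add_zero]
      exact hxF.2.2.1 q
  have hyUD : ∀ p, ∑ q, y p q ≤ 1 := by
    intro p
    rw [hrow]
    by_cases h : p = a (n + 1)
    · subst h
      rw [if_pos rfl]
      linarith
    · rw [if_neg h, add_zero]
      exact hxF.2.2.2 p
  -- y respects priorities
  have hyPR : I.PR y := by
    intro q p hp p' hp' hstr hpos
    by_cases h1 : ∑ q', x p' q' = 1
    · have hne' : p' ≠ a (n + 1) := by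
        rintro rfl
        exact absurd h1 (ne_of_lt hend')
      rw [hrow, if_neg hne', add_zero]
      exact h1
    · have hlt1 : ∑ q', x p' q' < 1 := lt_of_le_of_ne (hxF.2.2.2 p') h1
      exfalso
      by_cases h2 : S1 p q = 0
      · have hxpos : 0 < x p q := by
          have hnn := hS2nn p q
          rw [hy] at hpos; simp only [] at hpos
          rw [h2] at hpos
          nlinarith
        exact h1 (hxPR q p hp p' hp' hstr hxpos)
      · obtain ⟨i, hi, hterm⟩ := Finset.exists_ne_zero_of_sum_ne_zero h2
        have hcond : p = a (i + 1) ∧ q = c i := by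
          by_contra hc; rw [if_neg hc] at hterm; exact hterm rfl
        have hi' : i < n + 1 := mem_range.1 hi
        by_cases hlast : i = n
        · subst hlast
          have hpa : p = astar := by rw [hcond.1, ha, Function.update_self]
          have hp'S : p' ∈ S := mem_filter.2 ⟨mem_univ _, hcond.2 ▸ hp', hlt1⟩
          exact hstr.2 (hpa ▸ hcond.2 ▸ hmax p' hp'S)
        · refine hmin (i + 1) (by omega) ⟨c, Function.update a (i + 1) p', ⟨by omega, hslack0,
            ?_, ?_⟩, ?_⟩
          · intro m hm
            by_cases hmi : m = i
            · subst hmi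
              rw [Function.update_self]
              exact hcond.2 ▸ hp'
            · rw [Function.update_of_ne (by omega)]
              exact hfwd' m (by omega)
          · intro m hm1 hm2
            rw [Function.update_of_ne (by omega)]
            exact hbwd' m hm1 (by omega)
          · rw [Function.update_self]
            exact hlt1
  -- contradiction with Pareto efficiency
  refine hxPE ⟨y, ⟨hynn, hyER, hyQR, hyUD⟩, hyPR, fun p => ?_, ⟨a (n + 1), ?_⟩⟩
  · rw [hrow]
    by_cases h : p = a (n + 1)
    · rw [if_pos h]; linarith
    · rw [if_neg h]; linarith
  · rw [hrow, if_pos rfl]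
    linarith
end

section
/- Every allocation instance admits a valid perturbation profile, and consequently every allocation instance admits a valid allocation (one that is feasible and satisfies PR and PE). -/
open Finset

namespace AllocInstance

variable {A C : Type*} [Fintype A] [Fintype C]

theorem exists_pert (I : AllocInstance A C) (hpre : I.TotalPreorder) :
    ∃ δ : A → C → ℝ, I.ValidPerturbation δ := by
  classical
  obtain ⟨hrefl, htrans, htot⟩ := hpre
  set n : C → A → ℕ := fun c a =>
    (Finset.univ.filter (fun a'' => a'' ∈ I.elig c ∧ I.prio c a'' a)).card with hn
  set N : ℝ := (((Fintype.card A * Fintype.card C + 1) * (Fintype.card A + 1) : ℕ) : ℝ) with hN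
  have hNpos : 0 < N := by
    rw [hN]
    have h0 : (0:ℕ) < (Fintype.card A * Fintype.card C + 1) * (Fintype.card A + 1) := by positivity
    exact_mod_cast h0
  set ε : ℝ := 1 / (2 * N) with hε
  have hεpos : 0 < ε := by positivity
  refine ⟨fun a c => ε * ((n c a : ℝ) + 1), ?_, ?_, ?_⟩
  · intro a c
    have : (0:ℝ) < (n c a : ℝ) + 1 := by positivity
    positivity
  · have hbound : ∀ (a : A) (c : C), ε * ((n c a : ℝ) + 1) ≤ ε * ((Fintype.card A : ℝ) + 1) := by
      intro a c
      have : n c a ≤ Fintype.card A := by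
        simpa using Finset.card_le_card (Finset.filter_subset _ Finset.univ)
      have h' : ((n c a : ℝ) + 1) ≤ ((Fintype.card A : ℝ) + 1) := by
        exact_mod_cast Nat.succ_le_succ this
      exact mul_le_mul_of_nonneg_left h' hεpos.le
    calc ∑ a, ∑ c, ε * ((n c a : ℝ) + 1)
        ≤ ∑ a : A, ∑ c : C, ε * ((Fintype.card A : ℝ) + 1) := by
          exact Finset.sum_le_sum fun a _ => Finset.sum_le_sum fun c _ => hbound a c
      _ = (Fintype.card A : ℝ) * (Fintype.card C : ℝ) * (ε * ((Fintype.card A : ℝ) + 1)) := by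
          simp [Finset.sum_const, Finset.card_univ, mul_assoc]
      _ ≤ ε * N := by
          rw [hN]
          push_cast
          ring_nf
          nlinarith [hεpos.le, (by positivity : (0:ℝ) ≤ N⁻¹), (Nat.cast_nonneg (Fintype.card A) : (0:ℝ) ≤ _), (Nat.cast_nonneg (Fintype.card C) : (0:ℝ) ≤ _)]
      _ = 1 / 2 := by
          rw [hε]
          field_simp
  · intro c a ha a' ha'
    have hmono : I.prio c a a' → n c a ≤ n c a' := by
      intro h
      apply Finset.card_le_card
      intro b hb
      simp only [Finset.mem_filter, Finset.mem_univ, true_and] at hb ⊢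
      exact ⟨hb.1, htrans c b hb.1 a ha a' ha' hb.2 h⟩
    have hanti : ¬ I.prio c a a' → n c a' < n c a := by
      intro h
      have h' : I.prio c a' a := (htot c a ha a' ha').resolve_left h
      apply Finset.card_lt_card
      constructor
      · intro b hb
        simp only [Finset.mem_filter, Finset.mem_univ, true_and] at hb ⊢
        exact ⟨hb.1, htrans c b hb.1 a' ha' a ha hb.2 h'⟩
      · intro hsub
        have : a ∈ Finset.univ.filter (fun a'' => a'' ∈ I.elig c ∧ I.prio c a'' a) := by
          simp only [Finset.mem_filter, Finset.mem_univ, true_and]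
          exact ⟨ha, hrefl c a ha⟩
        have := hsub this
        simp only [Finset.mem_filter, Finset.mem_univ, true_and] at this
        exact h this.2
    constructor
    · intro h
      have := hmono h
      have h' : ((n c a : ℝ) + 1) ≤ ((n c a' : ℝ) + 1) := by exact_mod_cast Nat.succ_le_succ this
      exact mul_le_mul_of_nonneg_left h' hεpos.le
    · intro h
      by_contra hc
      have := hanti hc
      have h' : ((n c a' : ℝ) + 1) < ((n c a : ℝ) + 1) := by exact_mod_cast Nat.succ_lt_succ this
      have := mul_lt_mul_of_pos_left h' hεpos
      exact absurd h (not_le.mpr this)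

theorem exists_valid (I : AllocInstance A C) (hpre : I.TotalPreorder)
    (δ : A → C → ℝ) (hδ : I.ValidPerturbation δ) :
    ∃ x : A → C → ℝ, I.Valid x := by
  classical
  obtain ⟨hrefl, htrans, htot⟩ := hpre
  obtain ⟨hδpos, hδsum, hδcons⟩ := hδ
  have heval : ∀ (a : A) (c : C), Continuous (fun x : A → C → ℝ => x a c) :=
    fun a c => (continuous_apply c).comp (continuous_apply a)
  have hVcont : Continuous (I.V) := by
    unfold V
    exact continuous_finset_sum _ fun a _ => continuous_finset_sum _ fun c _ => heval a c
  have hVdcont : Continuous (I.Vd δ) := by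
    unfold Vd
    exact continuous_finset_sum _ fun a _ => continuous_finset_sum _ fun c _ =>
      (heval a c).mul continuous_const
  set F : Set (A → C → ℝ) := {x | I.Feasible x} with hF
  have h0F : (fun _ _ => (0:ℝ)) ∈ F := by
    refine ⟨fun a c => le_refl 0, fun a c _ => rfl, fun c => ?_, fun a => ?_⟩ <;> simp
  have hFclosed : IsClosed F := by
    have e : F = {x : A → C → ℝ | ∀ a c, 0 ≤ x a c} ∩
        ({x | ∀ a c, a ∉ I.elig c → x a c = 0} ∩
         ({x | ∀ c, ∑ a, x a c ≤ (I.quota c : ℝ)} ∩ {x | ∀ a, ∑ c, x a c ≤ 1})) := by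
      ext x
      simp only [hF, Set.mem_setOf_eq, Set.mem_inter_iff, Feasible]
    rw [e]
    refine IsClosed.inter ?_ (IsClosed.inter ?_ (IsClosed.inter ?_ ?_))
    · have e1 : {x : A → C → ℝ | ∀ a c, 0 ≤ x a c} = ⋂ a, ⋂ c, {x | 0 ≤ x a c} := by
        ext x; simp
      rw [e1]
      exact isClosed_iInter fun a => isClosed_iInter fun c =>
        isClosed_le continuous_const (heval a c)
    · have e2 : {x : A → C → ℝ | ∀ a c, a ∉ I.elig c → x a c = 0}
          = ⋂ a, ⋂ c, {x | a ∉ I.elig c → x a c = 0} := by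
        ext x; simp
      rw [e2]
      refine isClosed_iInter fun a => isClosed_iInter fun c => ?_
      by_cases h : a ∈ I.elig c
      · have e' : {x : A → C → ℝ | a ∉ I.elig c → x a c = 0} = Set.univ := by
          ext x; simp [h]
        rw [e']; exact isClosed_univ
      · have e' : {x : A → C → ℝ | a ∉ I.elig c → x a c = 0} = {x | x a c = 0} := by
          ext x; simp [h]
        rw [e']; exact isClosed_eq (heval a c) continuous_const
    · have e3 : {x : A → C → ℝ | ∀ c, ∑ a, x a c ≤ (I.quota c : ℝ)}
          = ⋂ c, {x | ∑ a, x a c ≤ (I.quota c : ℝ)} := by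
        ext x; simp
      rw [e3]
      exact isClosed_iInter fun c =>
        isClosed_le (continuous_finset_sum _ fun a _ => heval a c) continuous_const
    · have e4 : {x : A → C → ℝ | ∀ a, ∑ c, x a c ≤ 1} = ⋂ a, {x | ∑ c, x a c ≤ 1} := by
        ext x; simp
      rw [e4]
      exact isClosed_iInter fun a =>
        isClosed_le (continuous_finset_sum _ fun c _ => heval a c) continuous_const
  have hFcpt : IsCompact F := by
    have hsub : F ⊆ Set.pi Set.univ (fun _ : A => Set.pi Set.univ (fun _ : C => Set.Icc (0:ℝ) 1)) := by
      intro x hx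
      obtain ⟨h1, h2, h3, h4⟩ := hx
      intro a _
      intro c _
      refine ⟨h1 a c, ?_⟩
      calc x a c ≤ ∑ c', x a c' :=
            Finset.single_le_sum (fun c' _ => h1 a c') (Finset.mem_univ c)
        _ ≤ 1 := h4 a
    exact (isCompact_univ_pi fun _ => isCompact_univ_pi fun _ =>
      isCompact_Icc).of_isClosed_subset hFclosed hsub
  obtain ⟨x0, hx0F, hx0max⟩ := hFcpt.exists_isMaxOn ⟨_, h0F⟩ hVcont.continuousOn
  set M : Set (A → C → ℝ) := {y | y ∈ F ∧ I.V x0 ≤ I.V y} with hM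
  have hMcpt : IsCompact M :=
    hFcpt.of_isClosed_subset (hFclosed.inter (isClosed_le continuous_const hVcont))
      (fun y hy => hy.1)
  obtain ⟨z, hzM, hzmax⟩ := hMcpt.exists_isMaxOn ⟨x0, hx0F, le_refl _⟩ hVdcont.continuousOn
  obtain ⟨hzF, hzV⟩ := hzM
  have hzFeas : I.Feasible z := hzF
  obtain ⟨hz1, hz2, hz3, hz4⟩ := hzFeas
  -- PR
  have hPR : I.PR z := by
    intro c0 a ha a' ha' hstrict hpos
    by_contra hne
    have hlt1 : ∑ c', z a' c' < 1 := lt_of_le_of_ne (hz4 a') hne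
    have hneq : a ≠ a' := by
      rintro rfl
      exact hstrict.2 (hrefl c0 a ha)
    have hδlt : δ a' c0 < δ a c0 :=
      lt_of_not_ge fun hge => hstrict.2 ((hδcons c0 a ha a' ha').mpr hge)
    set ε := min (z a c0) (1 - ∑ c', z a' c') with hεdef
    have hεpos : 0 < ε := lt_min hpos (by linarith)
    have hεle1 : ε ≤ z a c0 := min_le_left _ _
    have hεle2 : ε ≤ 1 - ∑ c', z a' c' := min_le_right _ _
    set y : A → C → ℝ := fun b c => z b c + (if b = a' ∧ c = c0 then ε else 0)
        - (if b = a ∧ c = c0 then ε else 0) with hy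
    have hrow : ∀ (u : A) (b : A), ∑ c, (if b = u ∧ c = c0 then ε else 0)
        = if b = u then ε else 0 := by
      intro u b
      by_cases hb : b = u <;> simp [hb]
    have hcol : ∀ (u : A) (c : C), ∑ b, (if b = u ∧ c = c0 then ε else 0)
        = if c = c0 then ε else 0 := by
      intro u c
      by_cases hc : c = c0 <;> simp [hc]
    have hdouble : ∀ (u : A) (g : A → C → ℝ),
        ∑ b, ∑ c, (if b = u ∧ c = c0 then g b c else 0) = g u c0 := by
      intro u g
      have h' : ∀ b, ∑ c, (if b = u ∧ c = c0 then g b c else 0)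
          = if b = u then g b c0 else 0 := by
        intro b; by_cases hb : b = u <;> simp [hb]
      simp [h']
    have hycol : ∀ c, ∑ b, y b c = ∑ b, z b c := by
      intro c
      simp only [hy, Finset.sum_sub_distrib, Finset.sum_add_distrib, hcol]
      ring
    have hyrow : ∀ b, ∑ c, y b c
        = ∑ c, z b c + (if b = a' then ε else 0) - (if b = a then ε else 0) := by
      intro b
      simp only [hy, Finset.sum_sub_distrib, Finset.sum_add_distrib, hrow]
    have hyF : I.Feasible y := by
      refine ⟨?_, ?_, ?_, ?_⟩
      · intro b c
        simp only [hy]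
        split_ifs with h1 h2 h2
        · exact ((hneq (h2.1.symm.trans h1.1))).elim
        · have := hz1 b c
          linarith
        · obtain ⟨rfl, rfl⟩ := h2
          linarith
        · have := hz1 b c
          linarith
      · intro b c hbc
        have hb1 : ¬ (b = a ∧ c = c0) := by
          rintro ⟨rfl, rfl⟩; exact hbc ha
        have hb2 : ¬ (b = a' ∧ c = c0) := by
          rintro ⟨rfl, rfl⟩; exact hbc ha'
        simp only [hy]
        rw [if_neg hb2, if_neg hb1, hz2 b c hbc]
        ring
      · intro c
        rw [hycol]
        exact hz3 c
      · intro b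
        rw [hyrow]
        split_ifs with h1 h2 h2
        · exact ((hneq (h2.symm.trans h1))).elim
        · subst h1
          linarith
        · subst h2
          have := hz4 b
          linarith
        · have := hz4 b
          linarith
    have hyV : I.V y = I.V z := by
      unfold V
      simp only [hyrow, Finset.sum_sub_distrib, Finset.sum_add_distrib,
        Finset.sum_ite_eq', Finset.mem_univ, if_true]
      ring
    have hyM : y ∈ M := ⟨hyF, by rw [hyV]; exact hzV⟩
    have hVdlt : I.Vd δ z < I.Vd δ y := by
      have expand : ∀ b c, y b c * (1 - δ b c) = z b c * (1 - δ b c)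
          + (if b = a' ∧ c = c0 then ε * (1 - δ b c) else 0)
          - (if b = a ∧ c = c0 then ε * (1 - δ b c) else 0) := by
        intro b c
        simp only [hy]
        split_ifs <;> ring
      have hy' : I.Vd δ y = I.Vd δ z + ε * (1 - δ a' c0) - ε * (1 - δ a c0) := by
        unfold Vd
        simp only [expand, Finset.sum_sub_distrib, Finset.sum_add_distrib, hdouble]
      rw [hy']
      have h5 := hδpos a c0
      nlinarith [hεpos, hδlt]
    exact absurd (hzmax hyM) (not_le.mpr hVdlt)
  -- PE
  have hPE : I.PE z := by
    rintro ⟨y, hyF, -, hle, ⟨a, hlt⟩⟩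
    have hVlt : I.V z < I.V y :=
      Finset.sum_lt_sum (fun b _ => hle b) ⟨a, Finset.mem_univ a, hlt⟩
    have hy0 : I.V y ≤ I.V x0 := hx0max (hyF : y ∈ F)
    have : I.V x0 ≤ I.V z := hzV
    linarith
  exact ⟨z, ⟨hz1, hz2, hz3, hz4⟩, hPR, hPE⟩

end AllocInstance

/-- every allocation instance admits a valid perturbation profile,
and consequently admits a valid allocation. -/
theorem stmt6 {A C : Type*} [Fintype A] [Fintype C] (I : AllocInstance A C)
    (hpre : I.TotalPreorder) :
    (∃ δ : A → C → ℝ, I.ValidPerturbation δ) ∧ (∃ x : A → C → ℝ, I.Valid x) := by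
  obtain ⟨δ, hδ⟩ := I.exists_pert hpre
  exact ⟨⟨δ, hδ⟩, I.exists_valid hpre δ hδ⟩
end

section
/- Every valid integral allocation that additionally satisfies category stability (CS) equals the serial dictatorship allocation x_σ for some choice order σ. -/
/-!
Serial dictatorship can rebuild `x` one allocated pair at a time. Among the pairs of `x` not yet
rebuilt, category stability provides a pair `(a, c)` such that `c` strictly prefers none of their
agents to `a`, since the relation "the category of `p` strictly prefers the agent of `q`" has no
cycle on allocated pairs. Any eligible agent that `c` prefers to `a` is fully allocated in `x` by
priority respect, hence already served, so `a` is the top unallocated eligible agent of `c` and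
processing `c` next serves exactly `(a, c)`. Once `x` is rebuilt, Pareto efficiency shows that a
category with quota left has no eligible unallocated agent, so the remaining quota can be appended
to the choice order without changing the allocation.
-/

open Finset

namespace AllocInstance

variable {A C : Type*} [Fintype A] [Fintype C]

open Classical in
/-- One pass of serial dictatorship over a list of category entries: at each entry `c`,
if there is a highest-priority eligible unallocated agent, allocate one unit to them. -/
noncomputable def sdRun (I : AllocInstance A C) : List C → (A → C → ℝ) → (A → C → ℝ)
  | [], x => x
  | c :: rest, x =>
    if h : ∃ a, (a ∈ I.elig c ∧ ∀ c', x a c' = 0) ∧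
        (∀ a', a' ∈ I.elig c → (∀ c', x a' c' = 0) → I.prio c a a')
    then sdRun I rest (fun a' c' => if a' = h.choose ∧ c' = c then 1 else x a' c')
    else sdRun I rest x

/-- The serial dictatorship allocation `x_σ` for a choice order `σ`. -/
noncomputable def sdAlloc (I : AllocInstance A C) (σ : List C) : A → C → ℝ :=
  I.sdRun σ (fun _ _ => 0)

end AllocInstance

lemma Finset.exists_cycle_of_forall_exists {α : Type*} {R : α → α → Prop} {S : Finset α}
    (hne : S.Nonempty) (h : ∀ p ∈ S, ∃ q ∈ S, R p q) :
    ∃ (j : ℕ) (g : ℕ → α), 0 < j ∧ g j = g 0 ∧ ∀ i, g i ∈ S ∧ R (g i) (g (i + 1)) := by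
  choose! f hfS hfR using h
  obtain ⟨p, hp⟩ := hne
  have hmem : ∀ i, f^[i] p ∈ S := fun i => by
    induction i with
    | zero => exact hp
    | succ i ih => rw [Function.iterate_succ_apply']; exact hfS _ ih
  obtain ⟨m, n, hmn, hrep⟩ := Set.Finite.exists_lt_map_eq_of_forall_mem hmem S.finite_toSet
  refine ⟨n - m, fun i => f^[i + m] p, by omega,
    by simpa [Nat.sub_add_cancel hmn.le] using hrep.symm, fun i => ⟨hmem _, ?_⟩⟩
  show R (f^[i + m] p) (f^[i + 1 + m] p)
  rw [add_right_comm, Function.iterate_succ_apply']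
  exact hfR _ (hmem _)

lemma List.exists_append_count_eq_of_count_le {α : Type*} [Fintype α] [DecidableEq α]
    {n : α → ℕ} (L : List α) (h : ∀ a, L.count a ≤ n a) :
    ∃ l : List α, (∀ a, (L ++ l).count a = n a) ∧ ∀ a ∈ l, L.count a < n a := by
  refine ⟨Finset.univ.toList.flatMap fun a => List.replicate (n a - L.count a) a, fun a => ?_,
    fun a => ?_⟩
  · simpa [List.count_flatMap, List.count_replicate] using Nat.add_sub_cancel' (h a)
  · simp only [List.mem_flatMap, List.mem_replicate, Finset.mem_toList, Finset.mem_univ, true_and]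
    rintro ⟨b, hb, rfl⟩
    omega

namespace AllocInstance

variable {A C : Type*} {I : AllocInstance A C}

def Unallocated (s : A → C → ℝ) (a : A) : Prop :=
  ∀ c, s a c = 0

/-- The agent that serial dictatorship serves when it processes `c` at the state `s`. -/
def IsTopUnallocated (I : AllocInstance A C) (s : A → C → ℝ) (c : C) (a : A) : Prop :=
  (a ∈ I.elig c ∧ Unallocated s a) ∧ ∀ a' ∈ I.elig c, Unallocated s a' → I.prio c a a'

open Classical in
noncomputable def assign (s : A → C → ℝ) (a : A) (c : C) : A → C → ℝ :=
  fun a' c' => if a' = a ∧ c' = c then 1 else s a' c'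

open Classical in
noncomputable def zeroOn (x : A → C → ℝ) (S : Finset (A × C)) : A → C → ℝ :=
  fun a c => if (a, c) ∈ S then 0 else x a c

lemma IsTopUnallocated.unique (hord : I.StrictTotalPrio) {s : A → C → ℝ} {c : C} {a b : A}
    (ha : I.IsTopUnallocated s c a) (hb : I.IsTopUnallocated s c b) : a = b :=
  hord.2 c a ha.1.1 b hb.1.1 (ha.2 b hb.1.1 hb.1.2) (hb.2 a ha.1.1 ha.1.2)

lemma TotalPreorder.exists_forall_prio (hpre : I.TotalPreorder) {c : C} {U : Finset A}
    (hU : ∀ a ∈ U, a ∈ I.elig c) (hne : U.Nonempty) : ∃ a ∈ U, ∀ b ∈ U, I.prio c a b := by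
  classical
  obtain ⟨a, ha, hmax⟩ := U.exists_max_image (fun a => #{b ∈ U | I.prio c a b}) hne
  refine ⟨a, ha, fun b hb => by_contra fun hab => ?_⟩
  -- otherwise `b` would beat every agent that `a` beats, and also `b` itself
  have hba := (hpre.2.2 c a (hU a ha) b (hU b hb)).resolve_left hab
  have hsub : {b' ∈ U | I.prio c a b'} ⊂ {b' ∈ U | I.prio c b b'} := by
    refine Finset.ssubset_iff_of_subset (fun b' hb' => ?_) |>.2 ⟨b, ?_, ?_⟩
    · obtain ⟨hb'U, hab'⟩ := Finset.mem_filter.1 hb'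
      exact Finset.mem_filter.2
        ⟨hb'U, hpre.2.1 c b (hU b hb) a (hU a ha) b' (hU b' hb'U) hba hab'⟩
    · exact Finset.mem_filter.2 ⟨hb, hpre.1 c b (hU b hb)⟩
    · exact fun h => hab (Finset.mem_filter.1 h).2
  exact (hmax b hb).not_gt (Finset.card_lt_card hsub)

lemma exists_isTopUnallocated [Fintype A] (hpre : I.TotalPreorder) {s : A → C → ℝ} {c : C}
    {a : A} (ha : a ∈ I.elig c) (hun : Unallocated s a) : ∃ a₀, I.IsTopUnallocated s c a₀ := by
  classical
  obtain ⟨a₀, ha₀, htop⟩ := hpre.exists_forall_prio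
    (U := {b | b ∈ I.elig c ∧ Unallocated s b}) (fun b hb => (Finset.mem_filter.1 hb).2.1)
    ⟨a, Finset.mem_filter.2 ⟨Finset.mem_univ _, ha, hun⟩⟩
  exact ⟨a₀, (Finset.mem_filter.1 ha₀).2,
    fun b hb hbun => htop b (Finset.mem_filter.2 ⟨Finset.mem_univ _, hb, hbun⟩)⟩

section Assign

variable {s : A → C → ℝ} {a : A} {c : C}

open Classical in
lemma assign_eq_add (h : s a c = 0) (b : A) (c' : C) :
    assign s a c b c' = s b c' + if b = a ∧ c' = c then 1 else 0 := by
  unfold assign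
  split_ifs with hbc
  · rw [hbc.1, hbc.2, h, zero_add]
  · rw [add_zero]

open Classical in
lemma sum_assign_row [Fintype C] (h : s a c = 0) (b : A) :
    ∑ c', assign s a c b c' = ∑ c', s b c' + if b = a then 1 else 0 := by
  simp [assign_eq_add h, Finset.sum_add_distrib, ite_and]

open Classical in
lemma sum_assign_col [Fintype A] (h : s a c = 0) (c' : C) :
    ∑ b, assign s a c b c' = ∑ b, s b c' + if c' = c then 1 else 0 := by
  simp [assign_eq_add h, Finset.sum_add_distrib, ite_and]

lemma zeroOn_empty : zeroOn s ∅ = s := by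
  funext b c'
  simp [zeroOn]

lemma assign_zeroOn [DecidableEq A] [DecidableEq C] {S : Finset (A × C)} (h : s a c = 1) :
    assign (zeroOn s S) a c = zeroOn s (S.erase (a, c)) := by
  funext b c'
  by_cases hbc : b = a ∧ c' = c
  · obtain ⟨rfl, rfl⟩ := hbc
    simp [assign, zeroOn, h]
  · have : (b, c') ≠ (a, c) := fun h => hbc (Prod.mk.inj h)
    simp [assign, zeroOn, hbc, this]

end Assign

lemma CS.exists_forall_not_strict {x : A → C → ℝ} (hcs : I.CS x) {S : Finset (A × C)}
    (hS : ∀ p ∈ S, 0 < x p.1 p.2) (hne : S.Nonempty) :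
    ∃ p ∈ S, ∀ q ∈ S, ¬ I.Strict p.2 q.1 p.1 := by
  by_contra! hcyc
  obtain ⟨j, g, hj, hgj, hg⟩ := Finset.exists_cycle_of_forall_exists hne hcyc
  have hj2 : 2 ≤ j := by
    by_contra
    obtain rfl : j = 1 := by omega
    have hstr := (hg 0).2
    rw [hgj] at hstr
    exact hstr.2 hstr.1
  exact hcs ⟨j, fun i => (g i).2, fun i => (g i).1, hj2, congrArg _ hgj, congrArg _ hgj,
    fun i _ => ⟨hS _ (hg i).1, (hg i).2.1⟩, 0, by omega, (hg 0).2⟩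

section SerialDictatorship

variable [Fintype A] [Fintype C]

lemma sdRun_append (L₁ L₂ : List C) (s : A → C → ℝ) :
    I.sdRun (L₁ ++ L₂) s = I.sdRun L₂ (I.sdRun L₁ s) := by
  induction L₁ generalizing s with
  | nil => rfl
  | cons c L ih =>
    simp only [List.cons_append, sdRun]
    split_ifs <;> exact ih _

lemma sdAlloc_append (L₁ L₂ : List C) : I.sdAlloc (L₁ ++ L₂) = I.sdRun L₂ (I.sdAlloc L₁) :=
  sdRun_append L₁ L₂ _

lemma sdRun_of_forall_not_unallocated {L : List C} {s : A → C → ℝ}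
    (h : ∀ c ∈ L, ∀ a ∈ I.elig c, ¬ Unallocated s a) : I.sdRun L s = s := by
  induction L with
  | nil => rfl
  | cons c L ih =>
    rw [sdRun, dif_neg (fun ⟨a, ⟨ha, hun⟩, _⟩ => h c List.mem_cons_self a ha hun)]
    exact ih fun c' hc' => h c' (List.mem_cons_of_mem _ hc')

lemma sdRun_cons_of_isTopUnallocated (hord : I.StrictTotalPrio) {s : A → C → ℝ} {c : C} {a : A}
    (L : List C) (h : I.IsTopUnallocated s c a) :
    I.sdRun (c :: L) s = I.sdRun L (assign s a c) := by
  have hex : ∃ a, (a ∈ I.elig c ∧ ∀ c', s a c' = 0) ∧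
      ∀ a' ∈ I.elig c, (∀ c', s a' c' = 0) → I.prio c a a' := ⟨a, h⟩
  rw [sdRun, dif_pos hex, IsTopUnallocated.unique hord hex.choose_spec h]
  rfl

end SerialDictatorship

section Allocation

variable [Fintype A] [Fintype C] {x : A → C → ℝ}

lemma Feasible.eq_zero_of_eq_one (hfe : I.Feasible x) {a : A} {c c' : C} (h : x a c = 1)
    (hc : c' ≠ c) : x a c' = 0 := by
  classical
  have hrest : ∑ c'' ∈ Finset.univ.erase c, x a c'' ≤ 0 := by
    have := hfe.2.2.2 a
    rw [← Finset.add_sum_erase _ _ (Finset.mem_univ c), h] at this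
    linarith
  exact (Finset.sum_eq_zero_iff_of_nonneg fun _ _ => hfe.1 _ _).1
    (hrest.antisymm (Finset.sum_nonneg fun _ _ => hfe.1 _ _)) c' (by simp [hc])

lemma Feasible.sum_eq_one_of_not_unallocated (hfe : I.Feasible x) (hint : I.Integral x) {a : A}
    (h : ¬ Unallocated x a) : ∑ c, x a c = 1 := by
  obtain ⟨c, hc⟩ := not_forall.1 h
  refine (hfe.2.2.2 a).antisymm ?_
  calc (1 : ℝ) = x a c := ((hint a c).resolve_left hc).symm
    _ ≤ ∑ c, x a c := Finset.single_le_sum (fun c _ => hfe.1 a c) (Finset.mem_univ c)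

lemma Feasible.assign (hfe : I.Feasible x) {a : A} {c : C} (ha : a ∈ I.elig c)
    (hun : Unallocated x a) (hq : ∑ b, x b c + 1 ≤ I.quota c) : I.Feasible (assign x a c) := by
  refine ⟨fun b c' => ?_, fun b c' hb => ?_, fun c' => ?_, fun b => ?_⟩
  · unfold AllocInstance.assign
    split_ifs
    exacts [zero_le_one, hfe.1 b c']
  · unfold AllocInstance.assign
    split_ifs with hbc
    · exact absurd (hbc.1 ▸ hbc.2 ▸ ha) hb
    · exact hfe.2.1 b c' hb
  · rw [sum_assign_col (hun c)]
    split_ifs with hc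
    · exact hc ▸ hq
    · simpa using hfe.2.2.1 c'
  · rw [sum_assign_row (hun c)]
    split_ifs with hb
    · simp [hb, hun _]
    · simpa using hfe.2.2.2 b

lemma PR.assign (hfe : I.Feasible x) (hint : I.Integral x) (hpr : I.PR x) {a : A} {c : C}
    (htop : I.IsTopUnallocated x c a) : I.PR (assign x a c) := by
  intro c' b hb b' hb' hstr hpos
  have hfull : ∑ c'', x b' c'' = 1 := by
    by_cases hbc : b = a ∧ c' = c
    · obtain ⟨rfl, rfl⟩ := hbc
      exact hfe.sum_eq_one_of_not_unallocated hint fun hun => hstr.2 (htop.2 b' hb' hun)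
    · refine hpr c' b hb b' hb' hstr ?_
      simpa [AllocInstance.assign, hbc] using hpos
  have hb'a : b' ≠ a := by
    rintro rfl
    simp [htop.1.2 _] at hfull
  rw [sum_assign_row (htop.1.2 c), if_neg hb'a, add_zero, hfull]

lemma not_unallocated_of_sum_add_one_le_quota (hord : I.StrictTotalPrio) (hval : I.Valid x)
    (hint : I.Integral x) {c : C} (hq : ∑ b, x b c + 1 ≤ I.quota c) {a : A}
    (ha : a ∈ I.elig c) : ¬ Unallocated x a := by
  intro hun
  obtain ⟨hfe, hpr, hpe⟩ := hval
  obtain ⟨a₀, htop⟩ := exists_isTopUnallocated hord.1 ha hun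
  have hrow := sum_assign_row (htop.1.2 c) (s := x)
  refine hpe ⟨assign x a₀ c, hfe.assign htop.1.1 htop.1.2 hq, hpr.assign hfe hint htop,
    fun b => ?_, a₀, ?_⟩
  · rw [hrow]
    split_ifs <;> linarith
  · rw [hrow, if_pos rfl]
    linarith

lemma isTopUnallocated_zeroOn (hpre : I.TotalPreorder) (hfe : I.Feasible x) (hpr : I.PR x)
    {S : Finset (A × C)} (hS : ∀ p ∈ S, x p.1 p.2 = 1) {a : A} {c : C}
    (hac : (a, c) ∈ S) (hmin : ∀ q ∈ S, ¬ I.Strict c q.1 a) :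
    I.IsTopUnallocated (zeroOn x S) c a := by
  have hx : x a c = 1 := hS _ hac
  have ha : a ∈ I.elig c := by
    by_contra h
    simp [hfe.2.1 a c h] at hx
  refine ⟨⟨ha, fun c' => ?_⟩, fun a' ha' hun' => by_contra fun hna => ?_⟩
  · by_cases hc : c' = c
    · simp [zeroOn, hc, hac]
    · simp [zeroOn, hfe.eq_zero_of_eq_one hx hc]
  -- `a'` beats `a` at `c`, so by PR it holds a unit of `x`, and that pair must lie in `S`
  have hstr : I.Strict c a' a := ⟨(hpre.2.2 c a ha a' ha').resolve_left hna, hna⟩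
  have hfull := hpr c a ha a' ha' hstr (by rw [hx]; exact one_pos)
  obtain ⟨c'', hc''⟩ : ∃ c'', x a' c'' ≠ 0 := by
    by_contra! h
    simp [h] at hfull
  have hmem : (a', c'') ∈ S := by
    by_contra h
    exact hc'' (by simpa [zeroOn, h] using hun' c'')
  exact hmin _ hmem hstr

lemma exists_sdRun_zeroOn_eq [DecidableEq C] (hord : I.StrictTotalPrio) (hfe : I.Feasible x)
    (hpr : I.PR x) (hcs : I.CS x) (S : Finset (A × C)) (hS : ∀ p ∈ S, x p.1 p.2 = 1) :
    ∃ L : List C, (∀ c, (L.count c : ℝ) + ∑ a, zeroOn x S a c = ∑ a, x a c) ∧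
      I.sdRun L (zeroOn x S) = x := by
  classical
  induction S using Finset.strongInduction with
  | H S ih =>
    rcases S.eq_empty_or_nonempty with rfl | hne
    · exact ⟨[], by simp [zeroOn_empty], by rw [zeroOn_empty]; rfl⟩
    obtain ⟨⟨a, c⟩, hac, hmin⟩ :=
      hcs.exists_forall_not_strict (fun p hp => by rw [hS p hp]; exact one_pos) hne
    have htop := isTopUnallocated_zeroOn hord.1 hfe hpr hS hac hmin
    obtain ⟨L, hcount, hrun⟩ := ih _ (Finset.erase_ssubset hac)
      fun p hp => hS p (Finset.mem_of_mem_erase hp)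
    rw [← assign_zeroOn (hS _ hac)] at hcount hrun
    refine ⟨c :: L, fun c' => ?_, by rw [sdRun_cons_of_isTopUnallocated hord L htop, hrun]⟩
    rw [← hcount c', sum_assign_col (htop.1.2 c), List.count_cons]
    obtain rfl | hc := eq_or_ne c' c
    · simp only [beq_self_eq_true, if_true]
      push_cast
      ring
    · simp [hc, hc.symm]

lemma exists_sdAlloc_eq [DecidableEq C] (hord : I.StrictTotalPrio) (hfe : I.Feasible x)
    (hpr : I.PR x) (hint : I.Integral x) (hcs : I.CS x) :
    ∃ L : List C, (∀ c, (L.count c : ℝ) = ∑ a, x a c) ∧ I.sdAlloc L = x := by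
  classical
  obtain ⟨L, hcount, hrun⟩ := exists_sdRun_zeroOn_eq hord hfe hpr hcs
    {p | x p.1 p.2 = 1} fun p hp => (Finset.mem_filter.1 hp).2
  have hzero : zeroOn x {p | x p.1 p.2 = 1} = fun _ _ => 0 := by
    funext a c
    rcases hint a c with h | h <;> simp [zeroOn, h]
  rw [hzero] at hcount hrun
  exact ⟨L, fun c => by simpa using hcount c, hrun⟩

end Allocation

end AllocInstance

/-- every valid integral allocation satisfying category stability (CS)
is the serial dictatorship allocation `x_σ` for some choice order `σ`. -/
theorem stmt11 {A C : Type*} [Fintype A] [Fintype C] [DecidableEq C]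
    (I : AllocInstance A C) (hord : I.StrictTotalPrio)
    (x : A → C → ℝ) (hval : I.Valid x) (hint : I.Integral x) (hcs : I.CS x) :
    ∃ σ : List C, (∀ c, σ.count c = I.quota c) ∧ x = I.sdAlloc σ := by
  obtain ⟨L, hcount, hL⟩ := AllocInstance.exists_sdAlloc_eq hord hval.1 hval.2.1 hint hcs
  have hle : ∀ c, L.count c ≤ I.quota c := fun c => by
    exact_mod_cast (hcount c).trans_le (hval.1.2.2.1 c)
  obtain ⟨pad, hpad, hdeficit⟩ := L.exists_append_count_eq_of_count_le hle
  refine ⟨L ++ pad, hpad, ?_⟩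
  rw [AllocInstance.sdAlloc_append, hL, AllocInstance.sdRun_of_forall_not_unallocated]
  intro c hc a ha
  refine AllocInstance.not_unallocated_of_sum_add_one_le_quota hord hval hint ?_ ha
  rw [← hcount]
  exact_mod_cast hdeficit c hc
end

section
/- Let x be a valid integral allocation satisfying category stability (CS) with V(x) > 0. Then there exist a category c and an agent a with x_{a,c} = 1 such that a is the highest-priority agent of c, i.e., a ≽_c a' for every a' ∈ E_c. -/
open Finset

/-!
If no category allocates to its top agent, every allocated pair `(a, c)` is outranked in `c` by
some `a'`; by PR `a'` is fully allocated, so by integrality `a'` holds a unit in some `c'`.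
Iterating this step from an allocated pair must eventually cycle, and the cycle, in which every
priority relation is strict, violates CS.
-/

theorem Function.exists_isPeriodicPt_iterate {α : Type*} [Finite α] (f : α → α) (x : α) :
    ∃ m n, 0 < n ∧ Function.IsPeriodicPt f n (f^[m] x) := by
  obtain ⟨m, n, hne, heq⟩ := Finite.exists_ne_map_eq_of_infinite (f^[·] x)
  rcases hne.lt_or_gt with h | h
  · refine ⟨m, n - m, Nat.sub_pos_of_lt h, ?_⟩
    show f^[n - m] (f^[m] x) = f^[m] x
    rw [← Function.iterate_add_apply, Nat.sub_add_cancel h.le]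
    exact heq.symm
  · refine ⟨n, m - n, Nat.sub_pos_of_lt h, ?_⟩
    show f^[m - n] (f^[n] x) = f^[n] x
    rw [← Function.iterate_add_apply, Nat.sub_add_cancel h.le]
    exact heq

namespace AllocInstance

variable {A C : Type*} {I : AllocInstance A C} {x : A → C → ℝ} {a : A} {c : C}

theorem not_strict_self : ¬ I.Strict c a a := fun h => h.2 h.1

theorem Integral.eq_one_of_ne_zero (hint : I.Integral x) (h : x a c ≠ 0) : x a c = 1 :=
  (hint a c).resolve_left h

theorem Feasible.mem_elig_of_pos [Fintype A] [Fintype C] (hx : I.Feasible x) (h : 0 < x a c) :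
    a ∈ I.elig c := by
  by_contra hel
  exact h.ne' (hx.2.1 a c hel)

theorem exists_pos_of_V_pos [Fintype A] [Fintype C] (hV : 0 < I.V x) : ∃ a c, 0 < x a c := by
  obtain ⟨a, -, ha⟩ := Finset.exists_lt_of_sum_lt (f := fun _ => (0 : ℝ)) (by simpa [V] using hV)
  obtain ⟨c, -, hc⟩ := Finset.exists_lt_of_sum_lt (f := fun _ => (0 : ℝ)) (by simpa using ha)
  exact ⟨a, c, hc⟩

theorem exists_strict_of_not_top [Fintype C] (htot : I.TotalPreorder) (hpr : I.PR x)
    (hint : I.Integral x) (hel : a ∈ I.elig c) (hpos : 0 < x a c)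
    (hnot : ∃ a' ∈ I.elig c, ¬ I.prio c a a') :
    ∃ a' c', 0 < x a' c' ∧ I.Strict c a' a := by
  obtain ⟨a', ha', hna⟩ := hnot
  have hstrict : I.Strict c a' a := ⟨(htot.2.2 c a hel a' ha').resolve_left hna, hna⟩
  have hfull : ∑ c', x a' c' ≠ 0 := by
    rw [hpr c a hel a' ha' hstrict hpos]
    exact one_ne_zero
  obtain ⟨c', -, hc'⟩ := Finset.exists_ne_zero_of_sum_ne_zero hfull
  exact ⟨a', c', by rw [hint.eq_one_of_ne_zero hc']; exact one_pos, hstrict⟩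

theorem not_CS_of_forall_exists_strict [Finite A] [Finite C]
    (hsucc : ∀ a c, 0 < x a c → ∃ a' c', 0 < x a' c' ∧ I.Strict c a' a)
    (h₀ : 0 < x a c) : ¬ I.CS x := by
  have hnext : ∀ p : {p : A × C // 0 < x p.1 p.2}, ∃ q : {p : A × C // 0 < x p.1 p.2},
      I.Strict p.1.2 q.1.1 p.1.1 := fun ⟨(a, c), h⟩ =>
    let ⟨a', c', h', hs⟩ := hsucc a c h
    ⟨⟨(a', c'), h'⟩, hs⟩
  choose F hF using hnext
  obtain ⟨m, j, hj, hper⟩ := Function.exists_isPeriodicPt_iterate F ⟨(a, c), h₀⟩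
  set y := F^[m] ⟨(a, c), h₀⟩
  have hstep : ∀ i, I.Strict (F^[i] y).1.2 (F^[i + 1] y).1.1 (F^[i] y).1.1 := fun i => by
    rw [Function.iterate_succ_apply']
    exact hF _
  have hj2 : 2 ≤ j := by
    by_contra! hlt
    have hfix : F y = y := by simpa [show j = 1 by omega] using hper.eq
    exact not_strict_self (hfix ▸ hF y)
  intro hcs
  refine hcs ⟨j, fun i => (F^[i] y).1.2, fun i => (F^[i] y).1.1, hj2, ?_, ?_,
    fun i _ => ⟨(F^[i] y).2, (hstep i).1⟩, 0, hj, hstep 0⟩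
  · exact congrArg (fun p => p.1.2) hper.eq
  · exact congrArg (fun p => p.1.1) hper.eq

end AllocInstance

/-- a nonempty valid integral allocation satisfying CS allocates,
from some category, to that category's highest-priority agent. -/
theorem stmt12 {A C : Type*} [Fintype A] [Fintype C] (I : AllocInstance A C)
    (hord : I.StrictTotalPrio)
    (x : A → C → ℝ) (hval : I.Valid x) (hint : I.Integral x) (hcs : I.CS x)
    (hpos : 0 < I.V x) :
    ∃ (c : C) (a : A), x a c = 1 ∧ a ∈ I.elig c ∧ ∀ a' ∈ I.elig c, I.prio c a a' := by
  obtain ⟨hfeas, hpr, -⟩ := hval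
  by_contra! hnone
  obtain ⟨a₀, c₀, h₀⟩ := AllocInstance.exists_pos_of_V_pos hpos
  refine AllocInstance.not_CS_of_forall_exists_strict (fun a c hac => ?_) h₀ hcs
  have hel := hfeas.mem_elig_of_pos hac
  exact AllocInstance.exists_strict_of_not_top hord.1 hpr hint hel hac
    (hnone c a (hint.eq_one_of_ne_zero hac.ne') hel)
end
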